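/- arXiv:2203.15761 — 6 statements merged into one kernel-verified Lean document; each statement's English description precedes it below -/
import Mathlib

section
/- Let P(R) be the space of Borel probability measures on R equipped with the topology of weak convergence. The set D of all probability measures on R that belong to the maximum domain of attraction of some (one-dimensional) extreme value distribution is a set of the first Baire category (i.e., meagre) in P(R). -/
open MeasureTheory Filter Topology Set NNReal

/-- The cumulative distribution function of a Borel probability measure on `ℝ`:
`F(x) = μ((-∞, x])`. -/
noncomputable def distrib (μ : ProbabilityMeasure ℝ) (x : ℝ) : ℝ :=
  (μ (Set.Iic x) : ℝ≥0)

/-- The generalized extreme value distribution function `G_γ`, with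
`G_γ(x) = exp(-(1+γx)^(-1/γ))` where `1 + γx > 0` (interpreted as
`G_0(x) = exp(-e^(-x))` when `γ = 0`). -/
noncomputable def evCdf (γ : ℝ) (x : ℝ) : ℝ :=
  if γ = 0 then Real.exp (-Real.exp (-x))
  else if 0 < 1 + γ * x then Real.exp (-(1 + γ * x) ^ (-1 / γ))
  else if 0 < γ then 0 else 1

/-- `μ` belongs to the maximum domain of attraction `D(G_γ)`: there are `a n > 0` and `b n`
such that `(F (a n * x + b n)) ^ n → G_γ x` at every continuity point `x` of `G_γ`. -/
def MemDomAttr (γ : ℝ) (μ : ProbabilityMeasure ℝ) : Prop :=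
  ∃ a b : ℕ → ℝ, (∀ n, 0 < a n) ∧
    ∀ x : ℝ, ContinuousAt (evCdf γ) x →
      Tendsto (fun n : ℕ => distrib μ (a n * x + b n) ^ n) atTop (𝓝 (evCdf γ x))

/-!
If `F ∈ D(G_γ)` with norming constants `a n`, `b n`, then the quantile of `F` at tail
probability `c / n` is asymptotically `a n * x_γ(c) + b n`, where `G_γ(x_γ(c)) = exp (-c)`.
Hence the spacing ratio `(Q(1 - 1/(2n)) - Q(1 - 1/n)) / (Q(1 - 1/n) - Q(1 - 2/n))` converges,
and `D` is covered by the countably many sets on which this ratio eventually stays within `1/4`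
of a fixed rational. Each of these is nowhere dense: mixing a small weight `t` of three atoms
far in the right tail into any measure pins the three quantiles at level `n = 3 / t` near the
atoms, which forces the ratio to be large, and this pinning is an open condition by the
portmanteau theorem.
-/

open ProbabilityTheory

lemma isNowhereDense_compl_of_dense_interior {X : Type*} [TopologicalSpace X] {s : Set X}
    (hs : Dense (interior s)) : IsNowhereDense sᶜ :=
  ((isClosed_isNowhereDense_iff_compl.2 ⟨by simp [isOpen_interior], by simpa using hs⟩).2).mono
    (compl_subset_compl.2 interior_subset)

namespace MeasureTheory.ProbabilityMeasure

open unitInterval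

variable {Ω : Type*} [MeasurableSpace Ω]

noncomputable def mixture (t : I) (μ ν : ProbabilityMeasure Ω) : ProbabilityMeasure Ω :=
  ⟨toNNReal (σ t) • (μ : Measure Ω) + toNNReal t • (ν : Measure Ω), ⟨by
    simp [← ENNReal.coe_add]⟩⟩

lemma measureReal_mixture (t : I) (μ ν : ProbabilityMeasure Ω) (s : Set Ω) :
    (mixture t μ ν : Measure Ω).real s
      = (1 - (t : ℝ)) * (μ : Measure Ω).real s + t * (ν : Measure Ω).real s := by
  rw [mixture, coe_mk, measureReal_add_apply, measureReal_nnreal_smul_apply,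
    measureReal_nnreal_smul_apply, coe_toNNReal, coe_toNNReal, coe_symm_eq]

variable [TopologicalSpace Ω] [OpensMeasurableSpace Ω]

lemma integral_mixture (t : I) (μ ν : ProbabilityMeasure Ω) (f : BoundedContinuousFunction Ω ℝ) :
    ∫ x, f x ∂(mixture t μ ν : Measure Ω)
      = (1 - (t : ℝ)) * ∫ x, f x ∂(μ : Measure Ω) + t * ∫ x, f x ∂(ν : Measure Ω) := by
  rw [mixture, coe_mk, integral_add_measure (f.integrable _) (f.integrable _)]
  simp only [integral_smul_nnreal_measure, NNReal.smul_def, coe_toNNReal, coe_symm_eq, smul_eq_mul]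

lemma tendsto_mixture {ι : Type*} {l : Filter ι} {t : ι → I}
    (ht : Tendsto (fun i ↦ (t i : ℝ)) l (𝓝 0)) (μ : ProbabilityMeasure Ω)
    (ν : ι → ProbabilityMeasure Ω) : Tendsto (fun i ↦ mixture (t i) μ (ν i)) l (𝓝 μ) := by
  refine tendsto_iff_forall_integral_tendsto.2 fun f ↦ ?_
  have hbdd : IsBoundedUnder (· ≤ ·) l fun i ↦
      ‖∫ x, f x ∂(ν i : Measure Ω) - ∫ x, f x ∂(μ : Measure Ω)‖ :=
    isBoundedUnder_of ⟨2 * ‖f‖, fun i ↦ (norm_sub_le _ _).trans (by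
      linarith [f.norm_integral_le_norm (ν i : Measure Ω),
        f.norm_integral_le_norm (μ : Measure Ω)])⟩
  simpa [integral_mixture] using ((ht.zero_mul_isBoundedUnder_le hbdd).const_add
    (∫ x, f x ∂(μ : Measure Ω))).congr fun i ↦ by ring

variable [HasOuterApproxClosed Ω]

lemma upperSemicontinuous_measureReal_of_isClosed {F : Set Ω} (hF : IsClosed F) :
    UpperSemicontinuous fun μ : ProbabilityMeasure Ω ↦ (μ : Measure Ω).real F := by
  intro μ y hy
  have hlt : (μ : Measure Ω) F < ENNReal.ofReal y := by
    rwa [← ENNReal.ofReal_toReal (measure_ne_top _ F), ENNReal.ofReal_lt_ofReal_iff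
      (measureReal_nonneg.trans_lt hy)]
  filter_upwards [eventually_lt_of_limsup_lt
    ((limsup_measure_closed_le_of_tendsto tendsto_id hF).trans_lt hlt)] with ν hν
  exact ENNReal.toReal_lt_of_lt_ofReal hν

lemma lowerSemicontinuous_measureReal_of_isOpen {G : Set Ω} (hG : IsOpen G) :
    LowerSemicontinuous fun μ : ProbabilityMeasure Ω ↦ (μ : Measure Ω).real G := by
  intro μ y hy
  rcases lt_or_ge y 0 with hy0 | hy0
  · exact Eventually.of_forall fun ν ↦ hy0.trans_le measureReal_nonneg
  have hlt : ENNReal.ofReal y < (μ : Measure Ω) G := by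
    rwa [ENNReal.ofReal_lt_iff_lt_toReal hy0 (measure_ne_top _ G)]
  filter_upwards [eventually_lt_of_lt_liminf
    (hlt.trans_le (le_liminf_measure_open_of_tendsto tendsto_id hG))] with ν hν
  exact (ENNReal.ofReal_lt_iff_lt_toReal hy0 (measure_ne_top _ G)).1 hν

end MeasureTheory.ProbabilityMeasure

open ProbabilityMeasure

lemma distrib_eq_measureReal (μ : ProbabilityMeasure ℝ) (x : ℝ) :
    distrib μ x = (μ : Measure ℝ).real (Iic x) :=
  (measureReal_eq_coe_coeFn μ _).symm

lemma distrib_eq_cdf (μ : ProbabilityMeasure ℝ) : distrib μ = cdf (μ : Measure ℝ) :=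
  funext fun x ↦ by rw [distrib_eq_measureReal, cdf_eq_real]

noncomputable def quantile (μ : ProbabilityMeasure ℝ) (p : ℝ) : ℝ :=
  sInf {x | p ≤ distrib μ x}

lemma quantile_mem_Icc {μ : ProbabilityMeasure ℝ} {p u v : ℝ} (hu : distrib μ u < p)
    (hv : p ≤ distrib μ v) : quantile μ p ∈ Icc u v := by
  have hlow : u ∈ lowerBounds {x | p ≤ distrib μ x} := fun x hx ↦
    le_of_not_ge fun hxu ↦ (hu.trans_le hx).not_ge (distrib_eq_cdf μ ▸ monotone_cdf _ hxu)
  exact ⟨le_csInf ⟨v, hv⟩ hlow, csInf_le ⟨u, hlow⟩ hv⟩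

noncomputable def tailQuantile (μ : ProbabilityMeasure ℝ) (c : ℝ) (n : ℕ) : ℝ :=
  quantile μ (1 - c / n)

noncomputable def spacingRatio (μ : ProbabilityMeasure ℝ) (n : ℕ) : ℝ :=
  (tailQuantile μ (1 / 2) n - tailQuantile μ 1 n) / (tailQuantile μ 1 n - tailQuantile μ 2 n)

noncomputable def evPoint (γ c : ℝ) : ℝ :=
  if γ = 0 then -Real.log c else (c ^ (-γ) - 1) / γ

lemma one_add_mul_evPoint {γ : ℝ} (hγ : γ ≠ 0) (c : ℝ) : 1 + γ * evPoint γ c = c ^ (-γ) := by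
  rw [evPoint, if_neg hγ]
  field_simp
  ring

lemma evCdf_evPoint (γ : ℝ) {c : ℝ} (hc : 0 < c) : evCdf γ (evPoint γ c) = Real.exp (-c) := by
  rcases eq_or_ne γ 0 with rfl | hγ
  · simp [evCdf, evPoint, Real.exp_log hc]
  · rw [evCdf, if_neg hγ, one_add_mul_evPoint hγ, if_pos (Real.rpow_pos_of_pos hc _),
      ← Real.rpow_mul hc.le, show -γ * (-1 / γ) = 1 by field_simp, Real.rpow_one]

lemma continuousAt_evCdf_evPoint (γ : ℝ) {c : ℝ} (hc : 0 < c) :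
    ContinuousAt (evCdf γ) (evPoint γ c) := by
  rcases eq_or_ne γ 0 with rfl | hγ
  · unfold evCdf
    simp only [↓reduceIte]
    fun_prop
  have hpos : 0 < 1 + γ * evPoint γ c := by
    rw [one_add_mul_evPoint hγ]
    exact Real.rpow_pos_of_pos hc _
  have hlin : ContinuousAt (fun x ↦ 1 + γ * x) (evPoint γ c) := by fun_prop
  have hloc : (fun x ↦ Real.exp (-(1 + γ * x) ^ (-1 / γ))) =ᶠ[𝓝 (evPoint γ c)] evCdf γ := by
    filter_upwards [hlin.eventually (lt_mem_nhds hpos)] with x hx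
    rw [evCdf, if_neg hγ, if_pos hx]
  exact ((hlin.rpow_const (Or.inl hpos.ne')).neg.rexp).congr hloc

lemma continuousAt_evPoint (γ : ℝ) {c : ℝ} (hc : 0 < c) : ContinuousAt (evPoint γ) c := by
  rcases eq_or_ne γ 0 with rfl | hγ
  · unfold evPoint
    simp only [↓reduceIte]
    exact (Real.continuousAt_log hc.ne').neg
  · unfold evPoint
    simp only [hγ, ↓reduceIte]
    exact ((Real.continuousAt_rpow_const _ _ (Or.inl hc.ne')).sub continuousAt_const).div_const _

lemma eventually_lt_of_tendsto_pow {x y : ℕ → ℝ} {A B : ℝ}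
    (hx : Tendsto (fun n ↦ x n ^ n) atTop (𝓝 A)) (hy : Tendsto (fun n ↦ y n ^ n) atTop (𝓝 B))
    (hAB : A < B) (hy₀ : ∀ᶠ n in atTop, 0 ≤ y n) : ∀ᶠ n in atTop, x n < y n := by
  filter_upwards [hx.eventually_lt hy hAB, hy₀] with n hlt hn
  exact lt_of_pow_lt_pow_left₀ n hn hlt

lemma tendsto_one_sub_div_pow (c : ℝ) :
    Tendsto (fun n : ℕ ↦ (1 - c / n) ^ n) atTop (𝓝 (Real.exp (-c))) := by
  simpa [sub_eq_add_neg, neg_div] using Real.tendsto_one_add_div_pow_exp (-c)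

section DomainOfAttraction

variable {μ : ProbabilityMeasure ℝ} {γ : ℝ} {a b : ℕ → ℝ}

lemma eventually_tailQuantile_mem_Icc (ha : ∀ n, 0 < a n)
    (hconv : ∀ x, ContinuousAt (evCdf γ) x →
      Tendsto (fun n : ℕ ↦ distrib μ (a n * x + b n) ^ n) atTop (𝓝 (evCdf γ x)))
    {c₁ c c₂ : ℝ} (hc₁ : 0 < c₁) (h₁ : c₁ < c) (h₂ : c < c₂) :
    ∀ᶠ n in atTop, (tailQuantile μ c n - b n) / a n ∈ Icc (evPoint γ c₂) (evPoint γ c₁) := by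
  have hconv' {c' : ℝ} (hc' : 0 < c') := evCdf_evPoint γ hc' ▸
    hconv _ (continuousAt_evCdf_evPoint γ hc')
  have hlevel : ∀ᶠ n : ℕ in atTop, 0 ≤ 1 - c / n := by
    filter_upwards [(tendsto_const_div_atTop_nhds_zero_nat c).eventually (gt_mem_nhds one_pos)]
      with n hn using by linarith
  have hbelow := eventually_lt_of_tendsto_pow (hconv' (hc₁.trans (h₁.trans h₂)))
    (tendsto_one_sub_div_pow c) (Real.exp_lt_exp.2 (neg_lt_neg h₂)) hlevel
  have habove := eventually_lt_of_tendsto_pow (tendsto_one_sub_div_pow c) (hconv' hc₁)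
    (Real.exp_lt_exp.2 (neg_lt_neg h₁))
    (Eventually.of_forall fun n ↦ (distrib_eq_cdf μ ▸ cdf_nonneg _ _))
  filter_upwards [hbelow, habove] with n hbelow habove
  obtain ⟨hl, hr⟩ : tailQuantile μ c n ∈ _ := quantile_mem_Icc hbelow habove.le
  exact ⟨(le_div_iff₀ (ha n)).2 (by linarith), (div_le_iff₀ (ha n)).2 (by linarith)⟩

lemma tendsto_tailQuantile (ha : ∀ n, 0 < a n)
    (hconv : ∀ x, ContinuousAt (evCdf γ) x →
      Tendsto (fun n : ℕ ↦ distrib μ (a n * x + b n) ^ n) atTop (𝓝 (evCdf γ x)))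
    {c : ℝ} (hc : 0 < c) :
    Tendsto (fun n ↦ (tailQuantile μ c n - b n) / a n) atTop (𝓝 (evPoint γ c)) := by
  have hcont := (continuousAt_evPoint γ hc).tendsto
  refine tendsto_order.2 ⟨fun l hl ↦ ?_, fun u hu ↦ ?_⟩
  · obtain ⟨c₂, hl₂, hc₂⟩ := ((hcont.eventually (lt_mem_nhds hl)).filter_mono
      nhdsWithin_le_nhds |>.and (self_mem_nhdsWithin (s := Ioi c))).exists
    filter_upwards [eventually_tailQuantile_mem_Icc ha hconv (half_pos hc) (half_lt_self hc) hc₂]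
      with n hn using hl₂.trans_le hn.1
  · obtain ⟨c₁, hu₁, hc₁⟩ := ((hcont.eventually (gt_mem_nhds hu)).filter_mono
      nhdsWithin_le_nhds |>.and (Ioo_mem_nhdsLT hc)).exists
    filter_upwards [eventually_tailQuantile_mem_Icc ha hconv hc₁.1 hc₁.2 (lt_add_one c)]
      with n hn using hn.2.trans_lt hu₁

theorem MemDomAttr.tendsto_spacingRatio (h : MemDomAttr γ μ) :
    Tendsto (spacingRatio μ) atTop
      (𝓝 ((evPoint γ (1 / 2) - evPoint γ 1) / (evPoint γ 1 - evPoint γ 2))) := by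
  obtain ⟨a, b, ha, hconv⟩ := h
  have hQ {c : ℝ} (hc : 0 < c) := tendsto_tailQuantile ha hconv hc
  have hden : evPoint γ 1 - evPoint γ 2 ≠ 0 := fun h0 ↦ by
    have := congr_arg (evCdf γ) (sub_eq_zero.1 h0)
    rw [evCdf_evPoint γ one_pos, evCdf_evPoint γ two_pos, Real.exp_eq_exp] at this
    norm_num at this
  refine (((hQ one_half_pos).sub (hQ one_pos)).div ((hQ one_pos).sub (hQ two_pos)) hden).congr
    fun n ↦ ?_
  simp only [Pi.div_apply, spacingRatio, div_sub_div_same, sub_sub_sub_cancel_right,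
    div_div_div_cancel_right₀ (ha n).ne']

end DomainOfAttraction

def quantileWindow (p u v : ℝ) : Set (ProbabilityMeasure ℝ) :=
  {μ | (μ : Measure ℝ).real (Iic u) < p ∧ p < (μ : Measure ℝ).real (Iio v)}

lemma isOpen_quantileWindow (p u v : ℝ) : IsOpen (quantileWindow p u v) :=
  ((upperSemicontinuous_measureReal_of_isClosed isClosed_Iic).isOpen_preimage p).inter
    ((lowerSemicontinuous_measureReal_of_isOpen isOpen_Iio).isOpen_preimage p)

lemma quantile_mem_Icc_of_mem_quantileWindow {μ : ProbabilityMeasure ℝ} {p u v : ℝ}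
    (hμ : μ ∈ quantileWindow p u v) : quantile μ p ∈ Icc u v :=
  quantile_mem_Icc (by rw [distrib_eq_measureReal]; exact hμ.1)
    (by rw [distrib_eq_measureReal]; exact hμ.2.le.trans (measureReal_mono Iio_subset_Iic_self))

def spacingWindow (n : ℕ) (x₁ x₂ x₃ : ℝ) : Set (ProbabilityMeasure ℝ) :=
  quantileWindow (1 - 2 / n) (x₁ - 1 / 2) (x₁ + 1 / 2) ∩
    quantileWindow (1 - 1 / n) (x₂ - 1 / 2) (x₂ + 1 / 2) ∩
    quantileWindow (1 - 1 / 2 / n) (x₃ - 1 / 2) (x₃ + 1 / 2)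

lemma isOpen_spacingWindow (n : ℕ) (x₁ x₂ x₃ : ℝ) : IsOpen (spacingWindow n x₁ x₂ x₃) :=
  ((isOpen_quantileWindow _ _ _).inter (isOpen_quantileWindow _ _ _)).inter
    (isOpen_quantileWindow _ _ _)

lemma lt_abs_spacingRatio_sub {μ : ProbabilityMeasure ℝ} {n : ℕ} {x₁ x₃ : ℝ} (q : ℝ)
    (hμ : μ ∈ spacingWindow n x₁ (x₁ + 2) x₃) (hx₃ : x₁ + 3 * |q| + 5 ≤ x₃) :
    1 / 4 < |spacingRatio μ n - q| := by
  obtain ⟨⟨h₁, h₂⟩, h₃⟩ := hμ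
  obtain ⟨hQ₁, hQ₁'⟩ : tailQuantile μ 2 n ∈ _ := quantile_mem_Icc_of_mem_quantileWindow h₁
  obtain ⟨hQ₂, hQ₂'⟩ : tailQuantile μ 1 n ∈ _ := quantile_mem_Icc_of_mem_quantileWindow h₂
  obtain ⟨hQ₃, -⟩ : tailQuantile μ (1 / 2) n ∈ _ := quantile_mem_Icc_of_mem_quantileWindow h₃
  have hratio : (3 * |q| + 2) / 3 ≤ spacingRatio μ n :=
    div_le_div₀ (by linarith [abs_nonneg q]) (by linarith) (by linarith) (by linarith)
  linarith [le_abs_self q, le_abs_self (spacingRatio μ n - q)]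

noncomputable def threePoint (x₁ x₂ x₃ : ℝ) : ProbabilityMeasure ℝ :=
  mixture ⟨1 / 2, by norm_num⟩ (diracProba x₁)
    (mixture ⟨1 / 2, by norm_num⟩ (diracProba x₂) (diracProba x₃))

lemma measureReal_threePoint (x₁ x₂ x₃ : ℝ) (s : Set ℝ) :
    (threePoint x₁ x₂ x₃ : Measure ℝ).real s
      = 1 / 2 * s.indicator 1 x₁ + 1 / 4 * s.indicator 1 x₂ + 1 / 4 * s.indicator 1 x₃ := by
  rw [threePoint, measureReal_mixture, measureReal_mixture]
  simp only [measureReal_def, diracProba_toMeasure_apply, indicator]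
  split_ifs <;> norm_num

lemma mixture_threePoint_mem_spacingWindow {μ : ProbabilityMeasure ℝ} {t : unitInterval} {n : ℕ}
    {M x₁ x₂ x₃ : ℝ} (hM : 1 - t / 24 ≤ distrib μ M) (h₁ : M + 1 / 2 ≤ x₁) (h₂ : x₁ + 1 ≤ x₂)
    (h₃ : x₂ + 1 ≤ x₃) (hn : (n : ℝ) * t = 3) :
    mixture t μ (threePoint x₁ x₂ x₃) ∈ spacingWindow n x₁ x₂ x₃ := by
  set ν := threePoint x₁ x₂ x₃
  have ht : 0 < (t : ℝ) := lt_of_le_of_ne t.2.1 fun h ↦ by simp [← h] at hn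
  have hupper (s : Set ℝ) :
      (mixture t μ ν : Measure ℝ).real s ≤ 1 - t + t * (ν : Measure ℝ).real s := by
    rw [measureReal_mixture]
    nlinarith [measureReal_le_one (μ := (μ : Measure ℝ)) (s := s), t.2.2]
  have hlower (s : Set ℝ) (hs : Iic M ⊆ s) :
      1 - t - t / 24 + t * (ν : Measure ℝ).real s ≤ (mixture t μ ν : Measure ℝ).real s := by
    have := (distrib_eq_measureReal μ M ▸ hM).trans (measureReal_mono hs)
    rw [measureReal_mixture]
    nlinarith [t.2.2]
  have hn0 : (n : ℝ) ≠ 0 := left_ne_zero_of_mul (hn.trans_ne three_ne_zero)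
  have hn₂ : (2 : ℝ) / n = 2 * t / 3 := by rw [div_eq_iff hn0]; linarith
  have hn₁ : (1 : ℝ) / n = t / 3 := by rw [div_eq_iff hn0]; linarith
  have hn₀ : (1 : ℝ) / 2 / n = t / 6 := by rw [div_eq_iff hn0]; linarith
  -- The tail probabilities `2 / n, 1 / n, 1 / (2 n)` are `2t/3, t/3, t/6`; they separate the
  -- masses `t, t/2, t/4` of the atoms at or above `x₁, x₂, x₃`, with room for the mass `t/24`
  -- of `μ` above `M`.
  refine ⟨⟨⟨?_, ?_⟩, ?_, ?_⟩, ?_, ?_⟩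
  all_goals first
    | refine (hupper _).trans_lt ?_
    | refine lt_of_lt_of_le ?_ (hlower _ (Iic_subset_Iio.2 (by linarith)))
  all_goals
    simp only [ν, measureReal_threePoint, indicator_apply, mem_Iic, mem_Iio, Pi.one_apply,
      hn₀, hn₁, hn₂]
    split_ifs <;> linarith

lemma dense_interior_setOf_exists_lt_abs_spacingRatio_sub (q : ℝ) (N : ℕ) :
    Dense (interior {μ : ProbabilityMeasure ℝ | ∃ n ≥ N, 1 / 4 < |spacingRatio μ n - q|}) := by
  intro μ
  let t (k : ℕ) : unitInterval := ⟨1 / ((k : ℝ) + 1), by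
    constructor
    · positivity
    · exact div_le_one_of_le₀ (by linarith [k.cast_nonneg (α := ℝ)]) (by positivity)⟩
  have hF : Tendsto (distrib μ) atTop (𝓝 1) := distrib_eq_cdf μ ▸ tendsto_cdf_atTop _
  choose M hM using fun k ↦ (hF.eventually (lt_mem_nhds (show 1 - (t k : ℝ) / 24 < 1 by
    have : (0 : ℝ) < t k := by positivity
    linarith))).exists
  let x₁ (k : ℕ) := M k + 1 / 2
  let x₃ (k : ℕ) := x₁ k + 3 * |q| + 5
  refine mem_closure_of_tendsto (tendsto_mixture (t := t) tendsto_one_div_add_atTop_nhds_zero_nat μ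
    fun k ↦ threePoint (x₁ k) (x₁ k + 2) (x₃ k)) ?_
  filter_upwards [eventually_ge_atTop N] with k hk
  have hwindow : spacingWindow (3 * (k + 1)) (x₁ k) (x₁ k + 2) (x₃ k)
      ⊆ {μ | ∃ n ≥ N, 1 / 4 < |spacingRatio μ n - q|} :=
    fun ν hν ↦ ⟨3 * (k + 1), by omega, lt_abs_spacingRatio_sub q hν le_rfl⟩
  refine interior_maximal hwindow (isOpen_spacingWindow _ _ _ _)
    (mixture_threePoint_mem_spacingWindow (hM k).le le_rfl (by linarith)
      (by linarith [abs_nonneg q]) ?_)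
  simp only [t]
  push_cast
  field_simp

/-- The set `D` of distributions on `ℝ` in the maximum domain of attraction of some
extreme value distribution is meagre (of the first Baire category) in the space of Borel
probability measures on `ℝ` with the topology of weak convergence. -/
theorem meagre_domain_of_attraction :
    IsMeagre {μ : ProbabilityMeasure ℝ | ∃ γ : ℝ, MemDomAttr γ μ} := by
  have hnear (q : ℚ) (N : ℕ) :
      IsMeagre {μ : ProbabilityMeasure ℝ | ∀ n ≥ N, |spacingRatio μ n - q| ≤ 1 / 4} :=
    ((isNowhereDense_compl_of_dense_interior
      (dense_interior_setOf_exists_lt_abs_spacingRatio_sub q N)).mono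
        fun μ hμ ⟨n, hn, hlt⟩ ↦ (hμ n hn).not_gt hlt).isMeagre
  refine (isMeagre_iUnion fun q ↦ isMeagre_iUnion fun N ↦ hnear q N).mono ?_
  rintro μ ⟨γ, hγ⟩
  set L := (evPoint γ (1 / 2) - evPoint γ 1) / (evPoint γ 1 - evPoint γ 2)
  obtain ⟨q, hqL, hLq⟩ := exists_rat_btwn (sub_lt_self L (by norm_num : (0 : ℝ) < 1 / 4))
  obtain ⟨N, hN⟩ := eventually_atTop.1 (hγ.tendsto_spacingRatio.eventually
    (Ioo_mem_nhds (by linarith : (q : ℝ) - 1 / 4 < L) (by linarith : L < q + 1 / 4)))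
  exact mem_iUnion₂.2 ⟨q, N, fun n hn ↦
    abs_le.2 ⟨by linarith [(hN n hn).1], by linarith [(hN n hn).2]⟩⟩
end

section
/- Let P(R) be the space of Borel probability measures on R equipped with the topology of weak convergence. The set D of all probability measures on R that belong to the maximum domain of attraction of some (one-dimensional) extreme value distribution is dense in P(R). -/
open MeasureTheory Filter Topology Set NNReal

/-! ### Auxiliary constructions -/

namespace DenseDOA

/-- A measure on `[M, ∞)` with exact exponential tail `1 - F(x) = e^{-(x-M)}`,
realized as the pushforward of the uniform distribution on `(0,1]` under
`u ↦ M - log u`. -/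
noncomputable def tailExp (M : ℝ) : Measure ℝ :=
  Measure.map (fun u => M - Real.log u) (volume.restrict (Set.Ioc (0:ℝ) 1))

lemma measurable_tailFun (M : ℝ) : Measurable fun u : ℝ => M - Real.log u :=
  measurable_const.sub Real.measurable_log

lemma tailExp_apply (M : ℝ) {s : Set ℝ} (hs : MeasurableSet s) :
    tailExp M s = volume (((fun u : ℝ => M - Real.log u) ⁻¹' s) ∩ Set.Ioc (0:ℝ) 1) := by
  rw [tailExp, Measure.map_apply (measurable_tailFun M) hs, Measure.restrict_apply]
  exact (measurable_tailFun M) hs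

lemma tailExp_univ (M : ℝ) : tailExp M Set.univ = 1 := by
  rw [tailExp_apply M MeasurableSet.univ]
  simp [Real.volume_Ioc]

instance (M : ℝ) : IsProbabilityMeasure (tailExp M) := ⟨tailExp_univ M⟩

lemma tailExp_Iic (M x : ℝ) (hx : M ≤ x) :
    tailExp M (Set.Iic x) = ENNReal.ofReal (1 - Real.exp (M - x)) := by
  rw [tailExp_apply M measurableSet_Iic]
  have hset : ((fun u : ℝ => M - Real.log u) ⁻¹' Set.Iic x) ∩ Set.Ioc (0:ℝ) 1
      = Set.Icc (Real.exp (M - x)) 1 := by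
    ext u
    simp only [Set.mem_inter_iff, Set.mem_preimage, Set.mem_Iic, Set.mem_Ioc, Set.mem_Icc]
    constructor
    · rintro ⟨h1, h2, h3⟩
      refine ⟨?_, h3⟩
      rw [← Real.le_log_iff_exp_le h2]
      linarith
    · rintro ⟨h1, h2⟩
      have hu : 0 < u := lt_of_lt_of_le (Real.exp_pos _) h1
      have := (Real.le_log_iff_exp_le hu).2 h1
      exact ⟨by linarith, hu, h2⟩
  rw [hset, Real.volume_Icc]

/-- The approximating probability measure: with weight `1 - ε` take `μ` truncated at `M = k`
(pushforward under `x ↦ min x k`), and with weight `ε = 1/(k+1)` take the exponential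
tail measure `tailExp k`. -/
noncomputable def approx (μ : ProbabilityMeasure ℝ) (k : ℕ) : Measure ℝ :=
  ENNReal.ofReal (1 - ((k:ℝ)+1)⁻¹) • Measure.map (fun u : ℝ => min u k) (μ : Measure ℝ)
    + ENNReal.ofReal (((k:ℝ)+1)⁻¹) • tailExp k

lemma eps_pos (k : ℕ) : (0:ℝ) < ((k:ℝ)+1)⁻¹ := by positivity

lemma eps_le_one (k : ℕ) : ((k:ℝ)+1)⁻¹ ≤ 1 := by
  rw [inv_le_one_iff₀]; right; linarith [Nat.cast_nonneg (α := ℝ) k]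

lemma measurable_min (k : ℕ) : Measurable fun u : ℝ => min u (k:ℝ) :=
  measurable_id.min measurable_const

instance (μ : ProbabilityMeasure ℝ) (k : ℕ) : IsProbabilityMeasure (approx μ k) := by
  constructor
  rw [approx, Measure.add_apply, Measure.smul_apply, Measure.smul_apply, smul_eq_mul,
    smul_eq_mul, Measure.map_apply (measurable_min k) MeasurableSet.univ]
  simp only [Set.preimage_univ, tailExp_univ]
  rw [measure_univ]
  rw [mul_one, mul_one, ← ENNReal.ofReal_add (by linarith [eps_le_one k]) (eps_pos k).le]
  norm_num

/-- The approximating measure, as a probability measure. -/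
noncomputable def approxP (μ : ProbabilityMeasure ℝ) (k : ℕ) : ProbabilityMeasure ℝ :=
  ⟨approx μ k, inferInstance⟩

lemma distrib_eq_toReal (μ : ProbabilityMeasure ℝ) (x : ℝ) :
    distrib μ x = ((μ : Measure ℝ) (Set.Iic x)).toReal := rfl

lemma distrib_approxP (μ : ProbabilityMeasure ℝ) (k : ℕ) {x : ℝ} (hx : (k:ℝ) ≤ x) :
    distrib (approxP μ k) x = 1 - ((k:ℝ)+1)⁻¹ * Real.exp (k - x) := by
  have hmap : Measure.map (fun u : ℝ => min u k) (μ : Measure ℝ) (Set.Iic x) = 1 := by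
    rw [Measure.map_apply (measurable_min k) measurableSet_Iic]
    have : (fun u : ℝ => min u (k:ℝ)) ⁻¹' Set.Iic x = Set.univ := by
      ext u
      simp only [Set.mem_preimage, Set.mem_Iic, Set.mem_univ, iff_true]
      exact le_trans (min_le_right _ _) hx
    rw [this, measure_univ]
  have hexp : Real.exp ((k:ℝ) - x) ≤ 1 := Real.exp_le_one_iff.2 (by linarith)
  rw [distrib_eq_toReal]
  show ((approx μ k) (Set.Iic x)).toReal = _
  rw [approx, Measure.add_apply, Measure.smul_apply, Measure.smul_apply, smul_eq_mul,
    smul_eq_mul, hmap, tailExp_Iic k x hx, mul_one,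
    ← ENNReal.ofReal_mul (eps_pos k).le,
    ← ENNReal.ofReal_add (by linarith [eps_le_one k]) (mul_nonneg (eps_pos k).le (by linarith)),
    ENNReal.toReal_ofReal (by nlinarith [eps_pos k, eps_le_one k])]
  ring

lemma memDomAttr_approxP (μ : ProbabilityMeasure ℝ) (k : ℕ) :
    MemDomAttr 0 (approxP μ k) := by
  refine ⟨fun _ => 1, fun m => (k:ℝ) + Real.log (m * ((k:ℝ)+1)⁻¹), fun _ => one_pos, ?_⟩
  intro x _
  have hev : evCdf 0 x = Real.exp (-Real.exp (-x)) := by simp [evCdf]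
  rw [hev]
  have hlim := Real.tendsto_one_add_div_pow_exp (-Real.exp (-x))
  refine hlim.congr' ?_
  have htop : Tendsto (fun m : ℕ => Real.log (m * ((k:ℝ)+1)⁻¹)) atTop atTop := by
    apply Real.tendsto_log_atTop.comp
    exact Tendsto.atTop_mul_const (eps_pos k) tendsto_natCast_atTop_atTop
  filter_upwards [htop.eventually_ge_atTop (-x + 0), eventually_ge_atTop 1] with m hm hm1
  have hmpos : (0:ℝ) < m * ((k:ℝ)+1)⁻¹ := by
    have : (1:ℝ) ≤ m := by exact_mod_cast hm1
    nlinarith [eps_pos k]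
  have hx' : (k:ℝ) ≤ 1 * x + ((k:ℝ) + Real.log (m * ((k:ℝ)+1)⁻¹)) := by linarith
  rw [show (1:ℝ) + -Real.exp (-x) / m = distrib (approxP μ k) (1 * x + ((k:ℝ) + Real.log (m * ((k:ℝ)+1)⁻¹))) from ?_]
  rw [distrib_approxP μ k hx']
  have : (k:ℝ) - (1 * x + ((k:ℝ) + Real.log (m * ((k:ℝ)+1)⁻¹)))
      = -x + -(Real.log (m * ((k:ℝ)+1)⁻¹)) := by ring
  rw [this, Real.exp_add, Real.exp_neg (Real.log _), Real.exp_log hmpos]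
  have hmne : (m:ℝ) ≠ 0 := Nat.cast_ne_zero.2 (by omega)
  field_simp
  ring

/-- Weak convergence of the approximations to `μ`. -/
lemma tendsto_approxP (μ : ProbabilityMeasure ℝ) :
    Tendsto (approxP μ) atTop (𝓝 μ) := by
  rw [ProbabilityMeasure.tendsto_iff_forall_integral_tendsto]
  intro f
  have hint : ∀ k : ℕ, ∫ x, f x ∂(approxP μ k : Measure ℝ)
      = (1 - ((k:ℝ)+1)⁻¹) * ∫ x, f (min x k) ∂(μ : Measure ℝ)
        + ((k:ℝ)+1)⁻¹ * ∫ x, f x ∂(tailExp k) := by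
    intro k
    show ∫ x, f x ∂(approx μ k) = _
    rw [approx, integral_add_measure, integral_smul_measure, integral_smul_measure,
      ENNReal.toReal_ofReal (by linarith [eps_le_one k]),
      ENNReal.toReal_ofReal (eps_pos k).le, smul_eq_mul, smul_eq_mul,
      integral_map (measurable_min k).aemeasurable f.continuous.aestronglyMeasurable]
    · haveI : IsFiniteMeasure (Measure.map (fun u : ℝ => min u (k:ℝ)) (μ : Measure ℝ)) := by
        constructor
        rw [Measure.map_apply (measurable_min k) MeasurableSet.univ, Set.preimage_univ]
        exact measure_lt_top _ _
      exact (f.integrable _).smul_measure (by simp)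
    · exact (f.integrable _).smul_measure (by simp)
  simp only [hint]
  have h1 : Tendsto (fun k : ℕ => (1 - ((k:ℝ)+1)⁻¹)) atTop (𝓝 1) := by
    have : Tendsto (fun k : ℕ => ((k:ℝ)+1)⁻¹) atTop (𝓝 0) :=
      tendsto_one_div_add_atTop_nhds_zero_nat.congr (by intro n; simp [one_div])
    simpa using tendsto_const_nhds.sub this
  have h2 : Tendsto (fun k : ℕ => ∫ x, f (min x k) ∂(μ : Measure ℝ)) atTop
      (𝓝 (∫ x, f x ∂(μ : Measure ℝ))) := by
    apply tendsto_integral_of_dominated_convergence (fun _ => ‖f‖)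
    · intro k
      exact (f.continuous.comp (continuous_id.min continuous_const)).aestronglyMeasurable
    · exact integrable_const _
    · intro k
      exact Eventually.of_forall fun x => f.norm_coe_le_norm _
    · refine Eventually.of_forall fun x => ?_
      apply Tendsto.congr' _ (tendsto_const_nhds (x := f x))
      filter_upwards [eventually_ge_atTop ⌈x⌉₊] with k hk
      have hmin : min x (k:ℝ) = x := min_eq_left (le_trans (Nat.le_ceil x) (by exact_mod_cast hk))
      simp [hmin]
  have h3 : Tendsto (fun k : ℕ => ((k:ℝ)+1)⁻¹ * ∫ x, f x ∂(tailExp k)) atTop (𝓝 0) := by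
    apply squeeze_zero_norm (a := fun k : ℕ => ((k:ℝ)+1)⁻¹ * ‖f‖)
    · intro k
      rw [norm_mul, Real.norm_eq_abs, abs_of_pos (eps_pos k)]
      exact mul_le_mul_of_nonneg_left (f.norm_integral_le_norm _) (eps_pos k).le
    · have : Tendsto (fun k : ℕ => ((k:ℝ)+1)⁻¹) atTop (𝓝 0) :=
        tendsto_one_div_add_atTop_nhds_zero_nat.congr (by intro n; simp [one_div])
      simpa using this.mul_const ‖f‖
  have := (h1.mul h2).add h3
  simpa using this

end DenseDOA

/-- The set `D` of distributions on `ℝ` in the maximum domain of attraction of some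
extreme value distribution is dense in the space of Borel probability measures on `ℝ`
with the topology of weak convergence. -/
theorem dense_domain_of_attraction :
    Dense {μ : ProbabilityMeasure ℝ | ∃ γ : ℝ, MemDomAttr γ μ} := by
  intro μ
  exact mem_closure_of_tendsto (DenseDOA.tendsto_approxP μ)
    (Eventually.of_forall fun k => ⟨0, DenseDOA.memDomAttr_approxP μ k⟩)
end

section
/- Fix an integer k >= 1 and let P(R^k) be the space of Borel probability measures on R^k equipped with the topology of weak convergence. The set D of all probability measures on R^k that belong to the multivariate maximum domain of attraction is dense in P(R^k). -/
open MeasureTheory Filter Topology Set NNReal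

/-- The multivariate cumulative distribution function of a Borel probability measure on `ℝ^k`:
`F(x) = μ(∏ i, (-∞, x i])`. -/
noncomputable def mdistrib {k : ℕ} (μ : ProbabilityMeasure (Fin k → ℝ)) (x : Fin k → ℝ) : ℝ :=
  (μ (Set.Iic x) : ℝ≥0)

/-- `μ` belongs to the multivariate maximum domain of attraction: there are affine
normalizations `x ↦ α n * x + β n` (componentwise, with positive slopes) and a limit
distribution `G` with all one-dimensional marginals nondegenerate such that
`(F (α n * x + β n)) ^ n → G x` at every continuity point `x` of `G`. -/
def MemMultiDomAttr {k : ℕ} (μ : ProbabilityMeasure (Fin k → ℝ)) : Prop :=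
  ∃ α β : ℕ → Fin k → ℝ, (∀ n i, 0 < α n i) ∧
    ∃ G : ProbabilityMeasure (Fin k → ℝ),
      (∀ i : Fin k, ∀ c : ℝ, (G : Measure (Fin k → ℝ)).map (fun y => y i) ≠ Measure.dirac c) ∧
      ∀ x : Fin k → ℝ, ContinuousAt (mdistrib G) x →
        Tendsto (fun n : ℕ => mdistrib μ (fun i => α n i * x i + β n i) ^ n) atTop
          (𝓝 (mdistrib G x))

/-! Let `ν` be the product of standard Gumbel laws, whose distribution function `G` is
max-stable: `G (x + log n) ^ n = G x`. Given `μ`, let `Z ∼ μ` and `W ∼ ν` be independent and let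
`μₘ` be the law of `max (min Z m) (W - m)` (componentwise). Above the level `m` the distribution
function of `μₘ` is that of `ν` shifted by `m`, so with `βₙ = log n - m` its `n`-th power is
eventually equal to `G`: every `μₘ` lies in the domain of attraction of `ν`. On the other hand
`max (min Z m) (W - m) = Z` as soon as `m ≥ ‖Z‖ + ‖W‖`, hence `μₘ → μ` weakly. -/

open Real

noncomputable def gumbelCDF : StieltjesFunction ℝ where
  toFun t := exp (-exp (-t))
  mono' _ _ h := exp_le_exp.mpr (neg_le_neg (exp_le_exp.mpr (neg_le_neg h)))
  right_continuous' _ := by fun_prop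

lemma gumbelCDF_apply (t : ℝ) : gumbelCDF t = exp (-exp (-t)) := rfl

lemma tendsto_gumbelCDF_atBot : Tendsto gumbelCDF atBot (𝓝 0) := by
  have : Tendsto (fun t : ℝ => -exp (-t)) atBot atBot :=
    tendsto_neg_atTop_atBot.comp (tendsto_exp_atTop.comp tendsto_neg_atBot_atTop)
  exact tendsto_exp_atBot.comp this

lemma tendsto_gumbelCDF_atTop : Tendsto gumbelCDF atTop (𝓝 1) := by
  have : Tendsto (fun t : ℝ => -exp (-t)) atTop (𝓝 0) := by
    simpa using (tendsto_exp_atBot.comp tendsto_neg_atTop_atBot).neg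
  rw [← exp_zero]
  exact (continuous_exp.tendsto 0).comp this

lemma gumbelCDF_add_log_pow (t : ℝ) {n : ℕ} (hn : n ≠ 0) :
    gumbelCDF (t + log n) ^ n = gumbelCDF t := by
  rw [gumbelCDF_apply, gumbelCDF_apply, ← exp_nat_mul, neg_add, exp_add, exp_neg (log _),
    exp_log (Nat.cast_pos.mpr (Nat.pos_of_ne_zero hn))]
  field_simp

lemma gumbelCDF_pos (t : ℝ) : 0 < gumbelCDF t := exp_pos _

lemma gumbelCDF_lt_one (t : ℝ) : gumbelCDF t < 1 := by
  rw [gumbelCDF_apply, exp_lt_one_iff, neg_lt_zero]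
  exact exp_pos _

noncomputable def gumbel : Measure ℝ := gumbelCDF.measure

instance : IsProbabilityMeasure gumbel :=
  gumbelCDF.isProbabilityMeasure tendsto_gumbelCDF_atBot tendsto_gumbelCDF_atTop

lemma gumbel_Iic (t : ℝ) : gumbel (Iic t) = ENNReal.ofReal (gumbelCDF t) := by
  rw [gumbel, gumbelCDF.measure_Iic tendsto_gumbelCDF_atBot, sub_zero]

lemma gumbel_ne_dirac (c : ℝ) : gumbel ≠ Measure.dirac c := by
  intro h
  have := gumbel_Iic c
  rw [h, Measure.dirac_apply_of_mem self_mem_Iic, eq_comm, ENNReal.ofReal_eq_one] at this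
  exact (gumbelCDF_lt_one c).ne this

noncomputable def gumbelPi (ι : Type*) [Fintype ι] : ProbabilityMeasure (ι → ℝ) :=
  ⟨Measure.pi fun _ => gumbel, inferInstance⟩

lemma gumbelPi_Iic {ι : Type*} [Fintype ι] (x : ι → ℝ) :
    (gumbelPi ι : Measure (ι → ℝ)) (Iic x) = ENNReal.ofReal (∏ i, gumbelCDF (x i)) := by
  rw [ENNReal.ofReal_prod_of_nonneg fun i _ => (gumbelCDF_pos _).le, ← pi_univ_Iic]
  exact (Measure.pi_pi _ _).trans (Finset.prod_congr rfl fun i _ => gumbel_Iic (x i))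

lemma gumbelPi_map_eval {ι : Type*} [Fintype ι] (i : ι) :
    (gumbelPi ι : Measure (ι → ℝ)).map (fun y => y i) = gumbel := by
  classical
  have h := Measure.pi_map_eval (fun _ : ι => gumbel) i
  rwa [measure_univ, Finset.prod_const_one, one_smul] at h

section spliceTail

variable {ι : Type*}

def spliceTail (m : ℝ) (p : (ι → ℝ) × (ι → ℝ)) : ι → ℝ :=
  p.1 ⊓ Function.const ι m ⊔ (p.2 - Function.const ι m)

lemma continuous_spliceTail (m : ℝ) : Continuous (spliceTail (ι := ι) m) :=
  continuous_pi fun i =>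
    (((continuous_apply i).comp continuous_fst).min continuous_const).max
      (((continuous_apply i).comp continuous_snd).sub continuous_const)

lemma spliceTail_preimage_Iic {m : ℝ} {y : ι → ℝ} (hy : Function.const ι m ≤ y) :
    spliceTail m ⁻¹' Iic y = univ ×ˢ Iic (y + Function.const ι m) := by
  ext p
  simp only [spliceTail, mem_preimage, mem_Iic, sup_le_iff, mem_prod, mem_univ, true_and,
    sub_le_iff_le_add]
  exact and_iff_right (inf_le_right.trans hy)

lemma spliceTail_eventually_eq [Fintype ι] (p : (ι → ℝ) × (ι → ℝ)) :
    ∀ᶠ m : ℝ in atTop, spliceTail m p = p.1 := by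
  filter_upwards [eventually_ge_atTop (‖p.1‖ + ‖p.2‖)] with m hm
  funext i
  have h1 : |p.1 i| ≤ ‖p.1‖ := by simpa using norm_le_pi_norm p.1 i
  have h2 : |p.2 i| ≤ ‖p.2‖ := by simpa using norm_le_pi_norm p.2 i
  simp only [spliceTail, Pi.sup_apply, Pi.inf_apply, Pi.sub_apply, Function.const_apply]
  rw [inf_eq_left.mpr (by linarith [le_abs_self (p.1 i), norm_nonneg p.2]),
    sup_eq_left.mpr (by linarith [neg_abs_le (p.1 i), le_abs_self (p.2 i)])]

end spliceTail

section spliceMeasure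

variable {ι : Type*} [Fintype ι]

noncomputable def spliceMeasure (μ ν : ProbabilityMeasure (ι → ℝ)) (m : ℝ) :
    ProbabilityMeasure (ι → ℝ) :=
  (μ.prod ν).map (continuous_spliceTail m).measurable.aemeasurable

lemma spliceMeasure_Iic (μ ν : ProbabilityMeasure (ι → ℝ)) {m : ℝ} {y : ι → ℝ}
    (hy : Function.const ι m ≤ y) :
    (spliceMeasure μ ν m : Measure (ι → ℝ)) (Iic y) =
      (ν : Measure (ι → ℝ)) (Iic (y + Function.const ι m)) := by
  rw [spliceMeasure, ProbabilityMeasure.toMeasure_map, Measure.map_apply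
    (continuous_spliceTail m).measurable measurableSet_Iic, spliceTail_preimage_Iic hy]
  simp

lemma tendsto_spliceMeasure (μ ν : ProbabilityMeasure (ι → ℝ)) :
    Tendsto (fun m : ℕ => spliceMeasure μ ν m) atTop (𝓝 μ) := by
  have h := tendstoInDistribution_of_ae_tendsto (μ' := (μ.prod ν).toMeasure) (l := atTop)
    (fun m : ℕ => (continuous_spliceTail (m : ℝ)).measurable.aemeasurable)
    measurable_fst.aemeasurable (ae_of_all _ fun p => tendsto_const_nhds.congr'
      (EventuallyEq.symm (tendsto_natCast_atTop_atTop.eventually (spliceTail_eventually_eq p))))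
  nth_rw 2 [← ProbabilityMeasure.map_fst_prod μ ν]
  exact h.tendsto

end spliceMeasure

lemma mdistrib_eq_toReal {k : ℕ} (μ : ProbabilityMeasure (Fin k → ℝ)) (x : Fin k → ℝ) :
    mdistrib μ x = ((μ : Measure (Fin k → ℝ)) (Iic x)).toReal := rfl

lemma mdistrib_gumbelPi {k : ℕ} (x : Fin k → ℝ) :
    mdistrib (gumbelPi (Fin k)) x = ∏ i, gumbelCDF (x i) := by
  rw [mdistrib_eq_toReal, gumbelPi_Iic,
    ENNReal.toReal_ofReal (Finset.prod_nonneg fun i _ => (gumbelCDF_pos _).le)]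

lemma mdistrib_gumbelPi_add_log_pow {k : ℕ} (x : Fin k → ℝ) {n : ℕ} (hn : n ≠ 0) :
    mdistrib (gumbelPi (Fin k)) (x + Function.const _ (log n)) ^ n
      = mdistrib (gumbelPi (Fin k)) x := by
  simp only [mdistrib_gumbelPi, ← Finset.prod_pow, Pi.add_apply, Function.const_apply,
    gumbelCDF_add_log_pow _ hn]

lemma memMultiDomAttr_spliceMeasure_gumbelPi {k : ℕ} (μ : ProbabilityMeasure (Fin k → ℝ))
    (m : ℝ) : MemMultiDomAttr (spliceMeasure μ (gumbelPi (Fin k)) m) := by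
  refine ⟨fun _ _ => 1, fun n _ => log n - m, fun _ _ => one_pos, gumbelPi (Fin k),
    fun i c => ?_, fun x _ => ?_⟩
  · rw [gumbelPi_map_eval]
    exact gumbel_ne_dirac c
  have hlog : ∀ i, ∀ᶠ n : ℕ in atTop, 2 * m - x i ≤ log n := fun i =>
    (tendsto_log_atTop.comp tendsto_natCast_atTop_atTop).eventually_ge_atTop _
  refine tendsto_const_nhds.congr' ?_
  filter_upwards [eventually_all.mpr hlog, eventually_ne_atTop 0] with n hn hn0
  have hy : Function.const _ m ≤ fun i => 1 * x i + (log n - m) := fun i => by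
    simp only [Function.const_apply]
    linarith [hn i]
  symm
  rw [mdistrib_eq_toReal, spliceMeasure_Iic μ _ hy, ← mdistrib_eq_toReal,
    ← mdistrib_gumbelPi_add_log_pow x hn0]
  congr 2
  funext i
  simp only [Pi.add_apply, Function.const_apply]
  ring

theorem dense_multivariate_domain_of_attraction_general (k : ℕ) :
    Dense {μ : ProbabilityMeasure (Fin k → ℝ) | MemMultiDomAttr μ} := fun μ =>
  mem_closure_of_tendsto (tendsto_spliceMeasure μ (gumbelPi (Fin k)))
    (Eventually.of_forall fun m => memMultiDomAttr_spliceMeasure_gumbelPi μ m)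

/-- For every `k ≥ 1`, the set `D` of probability measures on `ℝ^k` belonging to the
multivariate maximum domain of attraction is dense in the space of Borel probability
measures on `ℝ^k` with the topology of weak convergence. -/
theorem dense_multivariate_domain_of_attraction (k : ℕ) (hk : 1 ≤ k) :
    Dense {μ : ProbabilityMeasure (Fin k → ℝ) | MemMultiDomAttr μ} :=
  dense_multivariate_domain_of_attraction_general k
end

section
/- Let P(R) be the space of Borel probability measures on R with the topology of weak convergence. The set D_+ = union over gamma > 0 of D(G_gamma), consisting of all distributions in the maximum domain of attraction of some Frechet-type extreme value distribution G_gamma with gamma > 0, is a set of the first Baire category (i.e., meagre) in P(R). -/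
open MeasureTheory Filter Topology Set NNReal

/-!
If `F^n(a_n x + b_n) → G_γ(x)`, the points where `F^n` crosses three fixed levels stay close to
`a_n x_i + b_n` for three fixed `x_i`, so for large `n` the ratio of their spacings is bounded by
some `K`; this is what membership in `spacingSet K N` records. Each `spacingSet K N` is closed by
the portmanteau theorem, and it has empty interior: adding to any law two atoms of mass `≍ 1/n`,
far out in the tail and `K + 2` apart, makes two of the crossing points coincide while the third
one lies beyond the gap. Hence `D_+` is contained in a countable union of closed nowhere dense sets.
-/

namespace MeasureTheory.ProbabilityMeasure

section Semicontinuity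

open scoped ENNReal

variable {Ω : Type*} [MeasurableSpace Ω]

lemma truncateToReal_one_measure (μ : ProbabilityMeasure Ω) (s : Set Ω) :
    ENNReal.truncateToReal 1 ((μ : Measure Ω) s) = μ s := by
  rw [ENNReal.truncateToReal_eq_toReal ENNReal.one_ne_top prob_le_one,
    ← ennreal_coeFn_eq_coeFn_toMeasure, ENNReal.coe_toReal]

lemma monotone_truncateToReal_one_pow (n : ℕ) :
    Monotone fun x : ℝ≥0∞ => ENNReal.truncateToReal 1 x ^ n := fun _ _ h =>
  pow_le_pow_left₀ ENNReal.truncateToReal_nonneg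
    (ENNReal.monotone_truncateToReal ENNReal.one_ne_top h) n

variable [TopologicalSpace Ω] [OpensMeasurableSpace Ω] [HasOuterApproxClosed Ω]

lemma upperSemicontinuous_measure_of_isClosed {F : Set Ω} (hF : IsClosed F) :
    UpperSemicontinuous fun μ : ProbabilityMeasure Ω => (μ : Measure Ω) F :=
  upperSemicontinuous_iff_limsup_le.2 fun _ => limsup_measure_closed_le_of_tendsto tendsto_id hF

lemma lowerSemicontinuous_measure_of_isOpen {G : Set Ω} (hG : IsOpen G) :
    LowerSemicontinuous fun μ : ProbabilityMeasure Ω => (μ : Measure Ω) G :=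
  lowerSemicontinuous_iff_le_liminf.2 fun _ => le_liminf_measure_open_of_tendsto tendsto_id hG

lemma isClosed_setOf_le_measure_pow {F : Set Ω} (hF : IsClosed F) (n : ℕ) (c : ℝ) :
    IsClosed {μ : ProbabilityMeasure Ω | c ≤ (μ F : ℝ) ^ n} := by
  have h : UpperSemicontinuous fun μ : ProbabilityMeasure Ω => (μ F : ℝ) ^ n := by
    simpa [Function.comp_def, truncateToReal_one_measure] using
      ((ENNReal.continuous_truncateToReal ENNReal.one_ne_top).pow n).comp_upperSemicontinuous
        (upperSemicontinuous_measure_of_isClosed hF) (monotone_truncateToReal_one_pow n)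
  exact upperSemicontinuous_iff_isClosed_preimage.1 h c

lemma isClosed_setOf_measure_pow_le {G : Set Ω} (hG : IsOpen G) (n : ℕ) (c : ℝ) :
    IsClosed {μ : ProbabilityMeasure Ω | (μ G : ℝ) ^ n ≤ c} := by
  have h : LowerSemicontinuous fun μ : ProbabilityMeasure Ω => (μ G : ℝ) ^ n := by
    simpa [Function.comp_def, truncateToReal_one_measure] using
      ((ENNReal.continuous_truncateToReal ENNReal.one_ne_top).pow n).comp_lowerSemicontinuous
        (lowerSemicontinuous_measure_of_isOpen hG) (monotone_truncateToReal_one_pow n)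
  exact lowerSemicontinuous_iff_isClosed_preimage.1 h c

end Semicontinuity

section Mixture

open unitInterval

variable {Ω : Type*} [MeasurableSpace Ω]

noncomputable def mix (p : I) (μ ν : ProbabilityMeasure Ω) : ProbabilityMeasure Ω :=
  ⟨toNNReal (σ p) • (μ : Measure Ω) + toNNReal p • (ν : Measure Ω),
    ⟨by simp [← ENNReal.coe_add]⟩⟩

lemma toFiniteMeasure_mix (p : I) (μ ν : ProbabilityMeasure Ω) :
    (mix p μ ν).toFiniteMeasure =
      toNNReal (σ p) • μ.toFiniteMeasure + toNNReal p • ν.toFiniteMeasure :=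
  rfl

lemma mix_apply (p : I) (μ ν : ProbabilityMeasure Ω) (s : Set Ω) :
    (mix p μ ν s : ℝ) = (1 - p) * μ s + p * ν s := by
  rw [← coeFn_toFiniteMeasure, toFiniteMeasure_mix]
  simp [coe_symm_eq]

lemma tendsto_mix [TopologicalSpace Ω] [OpensMeasurableSpace Ω] {ι : Type*} {l : Filter ι}
    {p : ι → I} {μ : ProbabilityMeasure Ω} {μs νs : ι → ProbabilityMeasure Ω}
    (hp : Tendsto p l (𝓝 0)) (hμ : Tendsto μs l (𝓝 μ)) :
    Tendsto (fun i => mix (p i) (μs i) (νs i)) l (𝓝 μ) := by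
  rw [tendsto_nhds_iff_toFiniteMeasure_tendsto_nhds]
  have h1 : Tendsto (fun i => toNNReal (σ (p i)) • (μs i).toFiniteMeasure) l
      (𝓝 μ.toFiniteMeasure) := by
    have := ((toNNReal_continuous.comp continuous_symm).tendsto 0).comp hp
    simpa using this.smul ((tendsto_nhds_iff_toFiniteMeasure_tendsto_nhds l).1 hμ)
  have h2 : Tendsto (fun i => toNNReal (p i) • (νs i).toFiniteMeasure) l (𝓝 0) := by
    refine FiniteMeasure.tendsto_zero_of_tendsto_zero_mass ?_
    simpa [FiniteMeasure.mass, FiniteMeasure.smul_apply, Function.comp_def] using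
      (toNNReal_continuous.tendsto 0).comp hp
  simpa [Function.comp_def, toFiniteMeasure_mix] using h1.add h2

end Mixture

end MeasureTheory.ProbabilityMeasure

open unitInterval ProbabilityMeasure

lemma monotone_distrib_pow (μ : ProbabilityMeasure ℝ) (n : ℕ) :
    Monotone fun x => distrib μ x ^ n := fun _ _ h =>
  pow_le_pow_left₀ (NNReal.coe_nonneg _) (by exact_mod_cast μ.apply_mono (Iic_subset_Iic.2 h)) n

/-- The levels `11/12 > 3/4 > 1/2` are arbitrary, up to the room that the estimates of
`twoAtomPerturbation_notMem_spacingSet` need. -/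
def spacingSet (K N : ℕ) : Set (ProbabilityMeasure ℝ) :=
  {μ | ∀ n ≥ N, ∀ u v : ℝ, distrib μ u ^ n < 11 / 12 → distrib μ v ^ n < 1 / 2 →
    (μ (Iio ((u + K * v) / (1 + K))) : ℝ) ^ n ≤ 3 / 4}

lemma isClosed_spacingSet (K N : ℕ) : IsClosed (spacingSet K N) := by
  simp only [spacingSet, ofPred_forall]
  refine isClosed_iInter fun n => isClosed_iInter fun _ => isClosed_iInter fun u =>
    isClosed_iInter fun v => ?_
  simp only [imp_iff_not_or, ofPred_or, not_lt]
  exact (isClosed_setOf_le_measure_pow isClosed_Iic n _).union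
    ((isClosed_setOf_le_measure_pow isClosed_Iic n _).union
      (isClosed_setOf_measure_pow_le isOpen_Iio n _))

lemma exists_mem_spacingSet_of_tendsto {μ : ProbabilityMeasure ℝ} {a b : ℕ → ℝ}
    (ha : ∀ n, 0 < a n) {xu xv xw pu pv pw : ℝ}
    (hu : Tendsto (fun n => distrib μ (a n * xu + b n) ^ n) atTop (𝓝 pu))
    (hv : Tendsto (fun n => distrib μ (a n * xv + b n) ^ n) atTop (𝓝 pv))
    (hw : Tendsto (fun n => distrib μ (a n * xw + b n) ^ n) atTop (𝓝 pw))
    (hpu : 11 / 12 < pu) (hpv : 1 / 2 < pv) (hpvw : pv < pw) (hpw : pw < 3 / 4) :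
    ∃ K N, μ ∈ spacingSet K N := by
  have hxvw : xv < xw := by
    by_contra! h
    exact hpvw.not_ge (le_of_tendsto_of_tendsto' hw hv fun n =>
      monotone_distrib_pow μ n (by gcongr; exact (ha n).le))
  obtain ⟨K, hK⟩ : ∃ K : ℕ, xu + K * xv ≤ (1 + K) * xw := by
    obtain ⟨K, hK⟩ := exists_nat_ge ((xu - xw) / (xw - xv))
    rw [div_le_iff₀ (sub_pos.2 hxvw)] at hK
    exact ⟨K, by linarith⟩
  obtain ⟨N, hN⟩ := eventually_atTop.1 ((hu.eventually (lt_mem_nhds hpu)).and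
    ((hv.eventually (lt_mem_nhds hpv)).and (hw.eventually (gt_mem_nhds hpw))))
  refine ⟨K, N, fun n hn u v hFu hFv => ?_⟩
  obtain ⟨hnu, hnv, hnw⟩ := hN n hn
  have hu' : u < a n * xu + b n := (monotone_distrib_pow μ n).reflect_lt (hFu.trans hnu)
  have hv' : v < a n * xv + b n := (monotone_distrib_pow μ n).reflect_lt (hFv.trans hnv)
  have hw' : (u + K * v) / (1 + K) ≤ a n * xw + b n := by
    rw [div_le_iff₀ (by positivity)]
    nlinarith [mul_le_mul_of_nonneg_left hK (ha n).le,
      mul_le_mul_of_nonneg_left hv'.le (Nat.cast_nonneg (α := ℝ) K)]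
  calc (μ (Iio ((u + K * v) / (1 + K))) : ℝ) ^ n ≤ distrib μ (a n * xw + b n) ^ n :=
        pow_le_pow_left₀ (NNReal.coe_nonneg _)
          (by exact_mod_cast μ.apply_mono (Iio_subset_Iic_self.trans (Iic_subset_Iic.2 hw'))) n
    _ ≤ 3 / 4 := hnw.le

lemma evCdf_eventuallyEq {γ x : ℝ} (hγ : γ ≠ 0) (hx : 0 < 1 + γ * x) :
    evCdf γ =ᶠ[𝓝 x] fun y => Real.exp (-(1 + γ * y) ^ (-1 / γ)) := by
  have hc : Continuous fun y : ℝ => 1 + γ * y := by fun_prop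
  filter_upwards [hc.continuousAt.eventually (lt_mem_nhds hx)] with y hy
  simp [evCdf, hγ, hy]

lemma continuousAt_evCdf {γ x : ℝ} (hγ : γ ≠ 0) (hx : 0 < 1 + γ * x) :
    ContinuousAt (evCdf γ) x := by
  refine ContinuousAt.congr ?_ (evCdf_eventuallyEq hγ hx).symm
  exact (((continuous_const.add (continuous_const.mul continuous_id)).continuousAt).rpow_const
    (Or.inl hx.ne')).neg.rexp

lemma exists_continuousAt_evCdf_eq {γ p : ℝ} (hγ : γ ≠ 0) (hp0 : 0 < p) (hp1 : p < 1) :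
    ∃ x, ContinuousAt (evCdf γ) x ∧ evCdf γ x = p := by
  have ht : 0 < -Real.log p := neg_pos.2 (Real.log_neg hp0 hp1)
  have hx : 1 + γ * (((-Real.log p) ^ (-γ) - 1) / γ) = (-Real.log p) ^ (-γ) := by
    field_simp
    ring
  have hpos : 0 < 1 + γ * (((-Real.log p) ^ (-γ) - 1) / γ) := by
    rw [hx]
    exact Real.rpow_pos_of_pos ht _
  refine ⟨_, continuousAt_evCdf hγ hpos, ?_⟩
  rw [(evCdf_eventuallyEq hγ hpos).self_of_nhds]
  dsimp only
  rw [hx, ← Real.rpow_mul ht.le, show -γ * (-1 / γ) = 1 by field_simp, Real.rpow_one, neg_neg,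
    Real.exp_log hp0]

lemma MemDomAttr.exists_mem_spacingSet {γ : ℝ} {μ : ProbabilityMeasure ℝ} (hγ : γ ≠ 0)
    (h : MemDomAttr γ μ) : ∃ K N, μ ∈ spacingSet K N := by
  obtain ⟨a, b, ha, hlim⟩ := h
  have level : ∀ p, 0 < p → p < 1 →
      ∃ x, Tendsto (fun n => distrib μ (a n * x + b n) ^ n) atTop (𝓝 p) := fun p hp0 hp1 => by
    obtain ⟨x, hcont, hx⟩ := exists_continuousAt_evCdf_eq hγ hp0 hp1
    exact ⟨x, hx ▸ hlim x hcont⟩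
  obtain ⟨xu, hu⟩ := level (19 / 20) (by norm_num) (by norm_num)
  obtain ⟨xv, hv⟩ := level (3 / 5) (by norm_num) (by norm_num)
  obtain ⟨xw, hw⟩ := level (2 / 3) (by norm_num) (by norm_num)
  exact exists_mem_spacingSet_of_tendsto ha hu hv hw (by norm_num) (by norm_num) (by norm_num)
    (by norm_num)

lemma one_sub_pow_le_inv_one_add_mul {x : ℝ} (hx0 : 0 ≤ x) (hx1 : x ≤ 1) (n : ℕ) :
    (1 - x) ^ n ≤ (1 + n * x)⁻¹ :=
  calc (1 - x) ^ n ≤ Real.exp (-x) ^ n :=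
        pow_le_pow_left₀ (sub_nonneg.2 hx1) (Real.one_sub_le_exp_neg x) n
    _ = Real.exp (-(n * x)) := by rw [← Real.exp_nat_mul]; ring_nf
    _ ≤ (1 + n * x)⁻¹ := by
      rw [Real.exp_neg]
      exact inv_anti₀ (by positivity) (by linarith [Real.add_one_le_exp (n * x)])

lemma exists_one_sub_lt_measure_Iio (μ : ProbabilityMeasure ℝ) {δ : ℝ} (hδ : 0 < δ) :
    ∃ T, 1 - δ < μ (Iio T) := by
  obtain ⟨x, hx⟩ := ((ProbabilityTheory.tendsto_cdf_atTop (μ : Measure ℝ)).eventually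
    (lt_mem_nhds (sub_lt_self 1 hδ))).exists
  refine ⟨x + 1, hx.trans_le ?_⟩
  rw [ProbabilityTheory.cdf_eq_real, measureReal_eq_coe_coeFn]
  exact_mod_cast μ.apply_mono (Iic_subset_Iio.2 (lt_add_one x))

lemma coe_diracProba_apply (x : ℝ) (s : Set ℝ) : (diracProba x s : ℝ) = s.indicator 1 x := by
  rw [← measureReal_eq_coe_coeFn, Measure.real, diracProba_toMeasure_apply]
  by_cases hx : x ∈ s <;> simp [hx]

section TwoAtomPerturbation

variable (μ : ProbabilityMeasure ℝ) (ε η : I) (T T' : ℝ)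

noncomputable def twoAtomPerturbation : ProbabilityMeasure ℝ :=
  mix η (mix ε μ (diracProba T)) (diracProba T')

lemma twoAtomPerturbation_apply (s : Set ℝ) :
    (twoAtomPerturbation μ ε η T T' s : ℝ) =
      (1 - η) * ((1 - ε) * μ s + ε * s.indicator 1 T) + η * s.indicator 1 T' := by
  simp only [twoAtomPerturbation, mix_apply, coe_diracProba_apply]

variable {μ ε η T T'} {s : Set ℝ}

lemma twoAtomPerturbation_apply_le_one_sub (hT' : T' ∉ s) :
    (twoAtomPerturbation μ ε η T T' s : ℝ) ≤ 1 - η := by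
  have hμ : (μ s : ℝ) ≤ 1 := by exact_mod_cast μ.apply_le_one s
  have hind : s.indicator (1 : ℝ → ℝ) T ≤ 1 := indicator_le_self' (fun _ _ => zero_le_one) T
  have hmass : (1 - ε) * (μ s : ℝ) + ε * s.indicator 1 T ≤ 1 := by
    nlinarith [mul_le_mul_of_nonneg_left hμ (sub_nonneg.2 ε.2.2),
      mul_le_mul_of_nonneg_left hind ε.2.1]
  rw [twoAtomPerturbation_apply, indicator_of_notMem hT']
  nlinarith [mul_le_mul_of_nonneg_left hmass (sub_nonneg.2 η.2.2)]

lemma twoAtomPerturbation_apply_le_mul (hT : T ∉ s) (hT' : T' ∉ s) :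
    (twoAtomPerturbation μ ε η T T' s : ℝ) ≤ (1 - η) * (1 - ε) := by
  have hμ : (μ s : ℝ) ≤ 1 := by exact_mod_cast μ.apply_le_one s
  rw [twoAtomPerturbation_apply, indicator_of_notMem hT, indicator_of_notMem hT']
  nlinarith [mul_le_mul_of_nonneg_left hμ (sub_nonneg.2 ε.2.2),
    mul_nonneg (sub_nonneg.2 η.2.2) (sub_nonneg.2 ε.2.2)]

lemma one_sub_sq_le_twoAtomPerturbation_apply (hT : T ∈ s) (hμ : 1 - (η : ℝ) ≤ μ s) :
    (1 - η) ^ 2 ≤ (twoAtomPerturbation μ ε η T T' s : ℝ) := by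
  have hind : 0 ≤ s.indicator (1 : ℝ → ℝ) T' := indicator_nonneg (fun _ _ => zero_le_one) T'
  rw [twoAtomPerturbation_apply, indicator_of_mem hT, Pi.one_apply]
  nlinarith [mul_le_mul_of_nonneg_left hμ (sub_nonneg.2 ε.2.2), mul_nonneg ε.2.1 η.2.1,
    sub_nonneg.2 η.2.2, mul_nonneg η.2.1 hind]

end TwoAtomPerturbation

/-- With `n ε = 1` and `n η = 1/10`, the crossing points `T + K + 1`, `T - 1` and
`T + 1 / (1 + K)` get `F^n ≤ 10/11`, `F^n ≤ 5/11` and `F(·-)^n ≥ 4/5`. -/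
lemma twoAtomPerturbation_notMem_spacingSet (μ : ProbabilityMeasure ℝ) {K N n : ℕ}
    (hn : N ≤ n) {ε η : I} (hε : (n : ℝ) * ε = 1) (hη : (η : ℝ) = ε / 10) {T : ℝ}
    (hT : 1 - (η : ℝ) ≤ μ (Iio T)) :
    twoAtomPerturbation μ ε η T (T + K + 2) ∉ spacingSet K N := by
  set ν := twoAtomPerturbation μ ε η T (T + K + 2)
  have hnη : (n : ℝ) * η = 1 / 10 := by rw [hη]; linarith
  have hu : distrib ν (T + K + 1) ^ n < 11 / 12 :=
    calc distrib ν (T + K + 1) ^ n ≤ (1 - η) ^ n :=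
          pow_le_pow_left₀ (NNReal.coe_nonneg _)
            (twoAtomPerturbation_apply_le_one_sub (by simp)) n
      _ ≤ (1 + (n : ℝ) * η)⁻¹ := one_sub_pow_le_inv_one_add_mul η.2.1 η.2.2 n
      _ < 11 / 12 := by rw [hnη]; norm_num
  have hv : distrib ν (T - 1) ^ n < 1 / 2 :=
    calc distrib ν (T - 1) ^ n ≤ (1 - η) ^ n * (1 - ε) ^ n := by
          rw [← mul_pow]
          exact pow_le_pow_left₀ (NNReal.coe_nonneg _)
            (twoAtomPerturbation_apply_le_mul (by simp) (by simp; linarith)) n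
      _ ≤ (1 + (n : ℝ) * η)⁻¹ * (1 + (n : ℝ) * ε)⁻¹ := by
          gcongr
          · exact pow_nonneg (sub_nonneg.2 ε.2.2) n
          · exact one_sub_pow_le_inv_one_add_mul η.2.1 η.2.2 n
          · exact one_sub_pow_le_inv_one_add_mul ε.2.1 ε.2.2 n
      _ < 1 / 2 := by rw [hnη, hε]; norm_num
  have hw : 3 / 4 < (ν (Iio (T + 1 / (1 + K))) : ℝ) ^ n := by
    have hgap : 0 < 1 / (1 + K : ℝ) := by positivity
    have hμ : 1 - (η : ℝ) ≤ μ (Iio (T + 1 / (1 + (K : ℝ)))) :=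
      hT.trans (NNReal.coe_le_coe.2 (μ.apply_mono (Iio_subset_Iio (by linarith))))
    calc (3 / 4 : ℝ) < 1 + (2 * n : ℕ) * -(η : ℝ) := by push_cast; linarith
      _ ≤ (1 + -(η : ℝ)) ^ (2 * n) := one_add_le_pow_of_two_add_nonneg (by linarith [η.2.2]) _
      _ = ((1 - η) ^ 2) ^ n := by rw [pow_mul]; ring
      _ ≤ _ := pow_le_pow_left₀ (by positivity)
          (one_sub_sq_le_twoAtomPerturbation_apply (by simpa using hgap) hμ) n
  intro hmem
  have hspacing := hmem n hn (T + K + 1) (T - 1) hu hv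
  rw [show (T + K + 1 + K * (T - 1)) / (1 + K) = T + 1 / (1 + K) by field_simp; ring] at hspacing
  linarith

lemma dense_compl_spacingSet (K N : ℕ) : Dense (spacingSet K N)ᶜ := by
  intro μ
  let ε : ℕ → I := fun j => ⟨1 / (j + 1), div_mem zero_le_one (by positivity) (by simp)⟩
  let η : ℕ → I := fun j => ⟨ε j / 10, div_mem (ε j).2.1 (by norm_num) (by linarith [(ε j).2.2])⟩
  have hε : Tendsto ε atTop (𝓝 0) :=
    tendsto_subtype_rng.2 tendsto_one_div_add_atTop_nhds_zero_nat
  have hη : Tendsto η atTop (𝓝 0) :=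
    tendsto_subtype_rng.2 (by simpa using (tendsto_subtype_rng.1 hε).div_const 10)
  choose T hT using fun j =>
    exists_one_sub_lt_measure_Iio μ (show (0 : ℝ) < η j by simp [η, ε]; positivity)
  refine mem_closure_of_tendsto (tendsto_mix (νs := fun j => diracProba (T j + K + 2)) hη
    (tendsto_mix (νs := fun j => diracProba (T j)) hε tendsto_const_nhds))
    (eventually_atTop.2 ⟨N, fun j hj => ?_⟩)
  exact twoAtomPerturbation_notMem_spacingSet μ (n := j + 1) (by omega) (by simp [ε]; field_simp)
    rfl (hT j).le

lemma isMeagre_spacingSet (K N : ℕ) : IsMeagre (spacingSet K N) :=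
  residual_of_dense_open (isClosed_spacingSet K N).isOpen_compl (dense_compl_spacingSet K N)

/-- The set `D_+ = ⋃_{γ > 0} D(G_γ)` of distributions on `ℝ` in the maximum domain of
attraction of some Fréchet-type extreme value distribution is meagre (of the first Baire
category) in the space of Borel probability measures on `ℝ` with the topology of weak
convergence. -/
theorem meagre_frechet_domain_of_attraction :
    IsMeagre {μ : ProbabilityMeasure ℝ | ∃ γ : ℝ, 0 < γ ∧ MemDomAttr γ μ} := by
  have hcover : {μ : ProbabilityMeasure ℝ | ∃ γ : ℝ, 0 < γ ∧ MemDomAttr γ μ} ⊆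
      ⋃ K, ⋃ N, spacingSet K N := by
    rintro μ ⟨γ, hγ, hμ⟩
    obtain ⟨K, N, hKN⟩ := hμ.exists_mem_spacingSet hγ.ne'
    exact mem_iUnion₂.2 ⟨K, N, hKN⟩
  exact (isMeagre_iUnion fun K => isMeagre_iUnion fun N => isMeagre_spacingSet K N).mono hcover
end

section
/- Let F be the distribution function of a Borel probability measure on R, and suppose F belongs to D(G_gamma) for some gamma < 0. Then the right endpoint x_F is finite. -/
open MeasureTheory Filter Topology Set NNReal

/-- The right endpoint `x_F = sup {x : F x < 1}` of a distribution, as an extended real. -/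
noncomputable def rightEndpoint (μ : ProbabilityMeasure ℝ) : EReal :=
  sSup ((fun x : ℝ => (x : EReal)) '' {x : ℝ | distrib μ x < 1})


/-!
Renormalize so that `F(C n + x A n)^n → Ψ_α(x)` with `α = -1/γ`, where `Ψ_α` is the Weibull law
and `C n` the image of the right endpoint of `G_γ`. By max-stability, `√Ψ_α(x) = Ψ_α(ρ x)` with
`ρ = 2^(-1/α) < 1`, so the normalizations at `n` and `2n` differ by a contraction: eventually
`A (2n) ≤ r A n` for some `r < 1` and `C (2n) ≤ C n + A (2n)`. Hence `C (2^k N)` stays below a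
geometric-series bound `M`, and `F(C n)^n → Ψ_α(0) = 1` forces `F(M) = 1`.
-/

/-- The Weibull extreme value distribution `Ψ_α(x) = exp(-(-x)^α)` for `x ≤ 0`, `1` for `x ≥ 0`. -/
noncomputable def weibullCdf (α x : ℝ) : ℝ :=
  Real.exp (-(-min x 0) ^ α)

section Weibull

variable {α : ℝ}

lemma weibullCdf_zero (hα : 0 < α) : weibullCdf α 0 = 1 := by
  simp [weibullCdf, Real.zero_rpow hα.ne']

lemma continuous_weibullCdf (hα : 0 ≤ α) : Continuous (weibullCdf α) := by
  unfold weibullCdf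
  fun_prop (disch := exact fun _ => Or.inr hα)

lemma weibullCdf_lt_weibullCdf (hα : 0 < α) {x y : ℝ} (h : min x 0 < min y 0) :
    weibullCdf α x < weibullCdf α y := by
  have hy : 0 ≤ -min y 0 := neg_nonneg.2 (min_le_right _ _)
  exact Real.exp_lt_exp.2 (neg_lt_neg (Real.rpow_lt_rpow hy (neg_lt_neg h) hα))

/-- Max-stability of `Ψ_α`. -/
lemma sqrt_weibullCdf (hα : 0 < α) (x : ℝ) :
    √(weibullCdf α x) = weibullCdf α ((2 : ℝ) ^ (-1 / α) * x) := by
  have hρ : 0 ≤ (2 : ℝ) ^ (-1 / α) := by positivity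
  have hm : 0 ≤ -min x 0 := neg_nonneg.2 (min_le_right _ _)
  have hρα : ((2 : ℝ) ^ (-1 / α)) ^ α = 1 / 2 := by
    rw [← Real.rpow_mul zero_le_two, div_mul_cancel₀ _ hα.ne', Real.rpow_neg_one, one_div]
  rw [weibullCdf, weibullCdf, ← Real.exp_half, ← mul_zero ((2 : ℝ) ^ (-1 / α)),
    ← mul_min_of_nonneg _ _ hρ, ← mul_neg, Real.mul_rpow hρ hm, hρα]
  ring_nf

end Weibull

lemma evCdf_eq_weibullCdf {γ : ℝ} (hγ : γ < 0) (x : ℝ) :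
    evCdf γ x = weibullCdf (-1 / γ) (-(1 + γ * x)) := by
  have hα : 0 < -1 / γ := div_pos_of_neg_of_neg neg_one_lt_zero hγ
  rw [evCdf, if_neg hγ.ne, weibullCdf]
  by_cases hx : 0 < 1 + γ * x
  · rw [if_pos hx, min_eq_left (by linarith), neg_neg]
  · rw [if_neg hx, if_neg hγ.not_gt, min_eq_right (by linarith), neg_zero,
      Real.zero_rpow hα.ne', neg_zero, Real.exp_zero]

lemma continuous_evCdf_of_neg {γ : ℝ} (hγ : γ < 0) : Continuous (evCdf γ) := by
  rw [funext (evCdf_eq_weibullCdf hγ)]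
  exact (continuous_weibullCdf (div_pos_of_neg_of_neg neg_one_lt_zero hγ).le).comp (by fun_prop)

section Distrib

variable {μ : ProbabilityMeasure ℝ}

lemma distrib_nonneg (x : ℝ) : 0 ≤ distrib μ x :=
  NNReal.coe_nonneg _

lemma distrib_le_one (x : ℝ) : distrib μ x ≤ 1 := by
  exact_mod_cast μ.apply_le_one (Iic x)

lemma distrib_mono : Monotone (distrib μ) := fun _ _ hxy =>
  NNReal.coe_le_coe.2 (μ.apply_mono (Iic_subset_Iic.2 hxy))

lemma rightEndpoint_le_of_one_le_distrib {M : ℝ} (hM : 1 ≤ distrib μ M) :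
    rightEndpoint μ ≤ M := by
  refine sSup_le ?_
  rintro _ ⟨x, hx, rfl⟩
  refine EReal.coe_le_coe_iff.2 (le_of_not_gt fun hMx => ?_)
  exact (hM.trans (distrib_mono hMx.le)).not_gt hx

lemma one_le_distrib_of_frequently_le {u : ℕ → ℝ} {M : ℝ}
    (hu : Tendsto (fun n => distrib μ (u n) ^ n) atTop (𝓝 1)) (hM : ∃ᶠ n in atTop, u n ≤ M) :
    1 ≤ distrib μ M := by
  by_contra! h
  obtain ⟨n, ⟨hn, hlt⟩, hle⟩ :=
    ((eventually_ge_atTop 1).and (hu.eventually (lt_mem_nhds h))).and_frequently hM |>.exists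
  exact hlt.not_ge ((pow_le_of_le_one (distrib_nonneg _) (distrib_le_one _) (by omega)).trans
    (distrib_mono hle))

/-- `C n` is the image of the right endpoint `-1/γ` of `G_γ` under `x ↦ a n x + b n`. -/
lemma MemDomAttr.exists_tendsto_weibullCdf {γ : ℝ} (hγ : γ < 0) (h : MemDomAttr γ μ) :
    ∃ A C : ℕ → ℝ, (∀ n, 0 < A n) ∧ ∀ x, Tendsto (fun n => distrib μ (C n + x * A n) ^ n)
      atTop (𝓝 (weibullCdf (-1 / γ) x)) := by
  obtain ⟨a, b, ha, hconv⟩ := h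
  have hα : 0 < -1 / γ := div_pos_of_neg_of_neg neg_one_lt_zero hγ
  refine ⟨fun n => a n * (-1 / γ), fun n => a n * (-1 / γ) + b n,
    fun n => mul_pos (ha n) hα, fun x => ?_⟩
  have hx := hconv ((1 + x) * (-1 / γ)) (continuous_evCdf_of_neg hγ).continuousAt
  rw [evCdf_eq_weibullCdf hγ,
    show -(1 + γ * ((1 + x) * (-1 / γ))) = x by field_simp [hγ.ne]; ring] at hx
  convert hx using 4
  ring

end Distrib

lemma eventually_lt_of_tendsto_pow_s13 {β : Type*} [LinearOrder β] {F : β → ℝ} (hF : Monotone F)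
    (hF0 : ∀ x, 0 ≤ F x) {u v : ℕ → β} {p q : ℝ}
    (hu : Tendsto (fun n => F (u n) ^ n) atTop (𝓝 p))
    (hv : Tendsto (fun n => F (v n) ^ n) atTop (𝓝 q)) (hpq : p < q) :
    ∀ᶠ n in atTop, u n < v n := by
  filter_upwards [hu.eventually_lt hv hpq] with n hn
  exact hF.reflect_lt (lt_of_pow_lt_pow_left₀ n (hF0 _) hn)

/-- `C + A / (1 - r)` does not increase along `N, 2N, 4N, …`. -/
lemma frequently_le_of_doubling {A C : ℕ → ℝ} {r : ℝ} {N : ℕ} (hN : 0 < N) (hr : r < 1)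
    (hA : ∀ n, 0 ≤ A n) (hdouble : ∀ n ≥ N, A (2 * n) ≤ r * A n ∧ C (2 * n) ≤ C n + A (2 * n)) :
    ∃ᶠ n in atTop, C n ≤ C N + A N / (1 - r) := by
  have hr' : 0 < 1 - r := sub_pos.2 hr
  have hbound : ∀ k, C (2 ^ k * N) + A (2 ^ k * N) / (1 - r) ≤ C N + A N / (1 - r) := by
    intro k
    induction k with
    | zero => simp
    | succ k ih =>
      set n := 2 ^ k * N
      obtain ⟨hAn, hCn⟩ := hdouble n (Nat.le_mul_of_pos_left _ (by positivity))
      have hA2 : A (2 * n) * (2 - r) ≤ A n := by nlinarith [hA n, sq_nonneg (1 - r)]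
      have hstep : C (2 * n) + A (2 * n) / (1 - r) ≤ C n + A n / (1 - r) := calc
        _ ≤ C n + A (2 * n) * (2 - r) / (1 - r) := by
          rw [show A (2 * n) * (2 - r) = A (2 * n) * (1 - r) + A (2 * n) by ring, add_div,
            mul_div_cancel_right₀ _ hr'.ne']
          linarith
        _ ≤ C n + A n / (1 - r) := by gcongr
      rw [pow_succ, mul_comm _ 2, mul_assoc]
      exact hstep.trans ih
  refine frequently_atTop.2 fun m => ⟨2 ^ m * N, ?_, ?_⟩
  · exact Nat.lt_two_pow_self.le.trans (Nat.le_mul_of_pos_right _ hN)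
  · linarith [hbound m, div_nonneg (hA (2 ^ m * N)) hr'.le]

section Doubling

variable {μ : ProbabilityMeasure ℝ} {α : ℝ} {A C : ℕ → ℝ} (hα : 0 < α)
  (hlim : ∀ x, Tendsto (fun n => distrib μ (C n + x * A n) ^ n) atTop (𝓝 (weibullCdf α x)))
include hα hlim

lemma tendsto_distrib_double (x : ℝ) :
    Tendsto (fun n => distrib μ (C (2 * n) + x * A (2 * n)) ^ n) atTop
      (𝓝 (weibullCdf α ((2 : ℝ) ^ (-1 / α) * x))) := by
  rw [← sqrt_weibullCdf hα]
  refine ((hlim x).comp (tendsto_id.const_mul_atTop' two_pos)).sqrt.congr fun n => ?_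
  simp only [Function.comp_apply, id, pow_mul', Real.sqrt_sq (pow_nonneg (distrib_nonneg _) n)]

lemma eventually_lt_double {x y : ℝ} (h : min x 0 < min ((2 : ℝ) ^ (-1 / α) * y) 0) :
    ∀ᶠ n in atTop, C n + x * A n < C (2 * n) + y * A (2 * n) :=
  eventually_lt_of_tendsto_pow_s13 distrib_mono distrib_nonneg (hlim x)
    (tendsto_distrib_double hα hlim y) (weibullCdf_lt_weibullCdf hα h)

lemma eventually_double_lt {x y : ℝ} (h : min ((2 : ℝ) ^ (-1 / α) * y) 0 < min x 0) :
    ∀ᶠ n in atTop, C (2 * n) + y * A (2 * n) < C n + x * A n :=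
  eventually_lt_of_tendsto_pow_s13 distrib_mono distrib_nonneg (tendsto_distrib_double hα hlim y)
    (hlim x) (weibullCdf_lt_weibullCdf hα h)

lemma exists_eventually_doubling :
    ∃ r < 1, ∀ᶠ n in atTop, A (2 * n) ≤ r * A n ∧ C (2 * n) ≤ C n + A (2 * n) := by
  set ρ : ℝ := (2 : ℝ) ^ (-1 / α) with hρ
  have hρ0 : 0 < ρ := by positivity
  have hρ1 : ρ < 1 :=
    Real.rpow_lt_one_of_one_lt_of_neg one_lt_two (div_neg_of_neg_of_pos neg_one_lt_zero hα)
  set ε := (1 - ρ) / 8 with hε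
  refine ⟨ρ + 4 * ε, by linarith, ?_⟩
  have hupper := eventually_lt_double (x := -(ρ + ε)) (y := -1) hα hlim
    (by rw [min_eq_left (by linarith), min_eq_left (by linarith)]; linarith)
  have hlower := eventually_double_lt (x := -(ρ / 2 - ε)) (y := -1 / 2) hα hlim
    (by rw [min_eq_left (by linarith)]; exact lt_min (by linarith) (by linarith))
  have hend := eventually_double_lt (x := 0) (y := -1) hα hlim
    (by rw [min_eq_left (by linarith)]; simpa using hρ0)
  -- `hupper` and `hlower` give `A (2n) / 2 < (ρ / 2 + 2ε) A n`; `hend` is `C (2n) - A (2n) < C n`.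
  filter_upwards [hupper, hlower, hend] with n h₁ h₂ h₃
  constructor <;> linarith

end Doubling

/-- If `F ∈ D(G_γ)` for some `γ < 0`, then the right endpoint `x_F` is finite. -/
theorem weibull_domain_necessary (μ : ProbabilityMeasure ℝ) (γ : ℝ) (hγ : γ < 0)
    (h : MemDomAttr γ μ) :
    rightEndpoint μ < ⊤ := by
  have hα : 0 < -1 / γ := div_pos_of_neg_of_neg neg_one_lt_zero hγ
  obtain ⟨A, C, hA, hlim⟩ := h.exists_tendsto_weibullCdf hγ
  obtain ⟨r, hr, hdouble⟩ := exists_eventually_doubling hα hlim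
  obtain ⟨N, hN⟩ := (hdouble.and (eventually_ge_atTop 1)).exists_forall_of_atTop
  have hbounded := frequently_le_of_doubling (hN N le_rfl).2 hr (fun n => (hA n).le)
    fun n hn => (hN n hn).1
  have hend : Tendsto (fun n => distrib μ (C n) ^ n) atTop (𝓝 1) := by
    simpa [weibullCdf_zero hα] using hlim 0
  exact (rightEndpoint_le_of_one_le_distrib
    (one_le_distrib_of_frequently_le hend hbounded)).trans_lt (EReal.coe_lt_top _)
end

section
/- Fix an integer k >= 2. Let S be a nowhere dense subset of the space P(R) of Borel probability measures on R with the topology of weak convergence. Then the set { F in P(R^k) : the first one-dimensional marginal of F belongs to S } is nowhere dense in the space P(R^k) of Borel probability measures on R^k with the topology of weak convergence. -/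
open MeasureTheory Filter Topology Set NNReal

/-- The first one-dimensional marginal of a Borel probability measure on `ℝ^k` (for
`0 < k`): the pushforward under the projection onto the first coordinate. -/
noncomputable def firstMarginal {k : ℕ} (hk : 0 < k) (μ : ProbabilityMeasure (Fin k → ℝ)) :
    ProbabilityMeasure ℝ :=
  μ.map (f := fun y => y ⟨0, hk⟩) (measurable_pi_apply _).aemeasurable

/-!
The marginal map `π` is continuous, and through a dense set of measures `μ` it admits a
continuous section `g` with `g (π μ) = μ`. Then every nonempty open `U` contains such a `μ`,
and `g ⁻¹' U` is a neighbourhood of `π μ` inside `π '' U`; so `π '' U` is never contained in the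
closure of a nowhere dense set.

The dense set consists of the finitely supported measures whose atoms have pairwise distinct
first coordinates: a continuous curve `σ : ℝ → ℝ^k` with `σ t 0 = t` passes through all the
atoms, and `g = σ_*`. These measures are dense since `μ` is the weak limit of its pushforwards
under simple-function approximations of the identity with values in a dense set on which the
first coordinate is injective.
-/

open Function

theorem IsNowhereDense.preimage_of_dense_sections {X Y : Type*} [TopologicalSpace X]
    [TopologicalSpace Y] {f : X → Y} (hf : Continuous f)
    (hsec : Dense {x | ∃ g : Y → X, Continuous g ∧ LeftInverse f g ∧ g (f x) = x})
    {S : Set Y} (hS : IsNowhereDense S) : IsNowhereDense (f ⁻¹' S) := by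
  rw [IsNowhereDense, ← subset_empty_iff]
  refine (interior_mono (hf.closure_preimage_subset S)).trans fun x₀ hx₀ => ?_
  obtain ⟨x, hxU, g, hg, hfg, hgx⟩ :=
    hsec.inter_open_nonempty _ isOpen_interior ⟨x₀, hx₀⟩
  have hsub : g ⁻¹' interior (f ⁻¹' closure S) ⊆ closure S := fun y hy => by
    simpa [hfg y] using interior_subset hy
  have hfx : f x ∈ interior (closure S) :=
    interior_maximal hsub (isOpen_interior.preimage hg) (by rwa [mem_preimage, hgx])
  rwa [show interior (closure S) = ∅ from hS] at hfx

universe u v in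
theorem exists_continuous_eqOn_of_finite {X : Type u} {Y : Type v} [TopologicalSpace X]
    [NormalSpace X] [T1Space X] [TopologicalSpace Y] [TietzeExtension.{u, v} Y] {F : Set X}
    (hF : F.Finite) (f : X → Y) : ∃ g : X → Y, Continuous g ∧ EqOn g f F := by
  have := hF.to_subtype
  obtain ⟨g, hg⟩ := ContinuousMap.exists_restrict_eq hF.isClosed
    ⟨fun x : F => f x, continuous_of_discreteTopology⟩
  exact ⟨g, g.continuous, fun x hx => congr($hg ⟨x, hx⟩)⟩

theorem exists_continuous_section_eval_of_injOn {ι : Type*} [DecidableEq ι] (i : ι)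
    {F : Set (ι → ℝ)} (hF : F.Finite) (hinj : InjOn (fun z => z i) F) :
    ∃ s : ℝ → ι → ℝ, Continuous s ∧ LeftInverse (fun z => z i) s ∧
      LeftInvOn s (fun z => z i) F := by
  obtain ⟨g, hg, hgF⟩ :=
    exists_continuous_eqOn_of_finite (hF.image (fun z => z i)) (invFunOn (fun z => z i) F)
  refine ⟨fun t => update (g t) i t, hg.update i continuous_id, fun t => by simp, fun z hz => ?_⟩
  change update (g (z i)) i (z i) = z
  rw [hgF (mem_image_of_mem _ hz), hinj.leftInvOn_invFunOn hz, update_eq_self]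

theorem exists_dense_injOn_eval {ι : Type*} [Countable ι] [DecidableEq ι] (i : ι) :
    ∃ s : Set (ι → ℝ), Dense s ∧ InjOn (fun z => z i) s := by
  obtain ⟨d, hd⟩ := TopologicalSpace.exists_dense_seq (ι → ℝ)
  -- the `i`-th coordinates of the points built on `d m` run through the coset `ℚ + m √2`,
  -- and these cosets are pairwise disjoint
  let p : ℕ × ℚ → ι → ℝ := fun mr => update (d mr.1) i (mr.2 + mr.1 * √2)
  refine ⟨range p, ?_, ?_⟩
  · refine dense_iff_inter_open.2 fun U hU hne => ?_
    obtain ⟨m, hm⟩ := hd.exists_mem_open hU hne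
    have hcoset : DenseRange fun r : ℚ => (r : ℝ) + m * √2 :=
      (Homeomorph.addRight _).surjective.denseRange.comp Rat.denseRange_cast
        (Homeomorph.addRight _).continuous
    have hline : Continuous fun t => update (d m) i t := continuous_const.update i continuous_id
    obtain ⟨_, ht, r, rfl⟩ :=
      hcoset.inter_open_nonempty _ (hU.preimage hline) ⟨d m i, by simpa using hm⟩
    exact ⟨p (m, r), ht, (m, r), rfl⟩
  · rintro _ ⟨⟨m, r⟩, rfl⟩ _ ⟨⟨m', r'⟩, rfl⟩ h
    simp only [p, update_self] at h
    obtain rfl : m = m' := by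
      by_contra hne
      refine (irrational_sqrt_two.intCast_mul
        (sub_ne_zero.2 (Nat.cast_injective.ne hne) : (m : ℤ) - m' ≠ 0)).ne_rat (r' - r) ?_
      push_cast
      linarith
    obtain rfl : r = r' := by exact_mod_cast add_right_cancel h
    rfl

namespace MeasureTheory.ProbabilityMeasure

variable {X Y : Type*} [MeasurableSpace X] [MeasurableSpace Y]

theorem map_id (μ : ProbabilityMeasure X) : μ.map aemeasurable_id = μ :=
  toMeasure_injective (Measure.map_id)

theorem map_map_of_leftInverse {p : X → Y} {s : Y → X} (hp : Measurable p) (hs : Measurable s)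
    (hps : LeftInverse p s) (ρ : ProbabilityMeasure Y) :
    (ρ.map hs.aemeasurable).map hp.aemeasurable = ρ := by
  refine toMeasure_injective ?_
  simp only [toMeasure_map, Measure.map_map hp hs, hps.comp_eq_id, Measure.map_id]

theorem map_map_map_of_leftInvOn_range {Z : Type*} [MeasurableSpace Z]
    (μ : ProbabilityMeasure Z) {D : Z → X} {p : X → Y} {s : Y → X} (hD : Measurable D)
    (hp : Measurable p) (hs : Measurable s) (hsp : LeftInvOn s p (range D)) :
    ((μ.map hD.aemeasurable).map hp.aemeasurable).map hs.aemeasurable =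
      μ.map hD.aemeasurable := by
  refine toMeasure_injective ?_
  simp only [toMeasure_map, Measure.map_map hp hD, Measure.map_map hs (hp.comp hD)]
  rw [show s ∘ p ∘ D = D from funext fun z => hsp (mem_range_self z)]

theorem tendsto_map_of_ae_tendsto [TopologicalSpace Y] [OpensMeasurableSpace Y]
    (μ : ProbabilityMeasure X) {f : ℕ → X → Y} {g : X → Y} (hf : ∀ n, AEMeasurable (f n) μ)
    (hg : AEMeasurable g μ)
    (hlim : ∀ᵐ x ∂(μ : Measure X), Tendsto (fun n => f n x) atTop (𝓝 (g x))) :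
    Tendsto (fun n => μ.map (hf n)) atTop (𝓝 (μ.map hg)) := by
  refine tendsto_iff_forall_integral_tendsto.2 fun φ => ?_
  simp only [toMeasure_map]
  rw [integral_map hg φ.continuous.aestronglyMeasurable]
  simp_rw [integral_map (hf _) φ.continuous.aestronglyMeasurable]
  refine tendsto_integral_of_dominated_convergence (fun _ => ‖φ‖)
    (fun n => (φ.continuous.measurable.comp_aemeasurable (hf n)).aestronglyMeasurable)
    (integrable_const _) (fun n => ae_of_all _ fun x => φ.norm_coe_le_norm _) ?_
  filter_upwards [hlim] with x hx using (φ.continuous.tendsto _).comp hx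

end MeasureTheory.ProbabilityMeasure

theorem dense_setOf_exists_section_map_eval {ι : Type*} [Fintype ι] [DecidableEq ι] (i : ι) :
    Dense {μ : ProbabilityMeasure (ι → ℝ) |
      ∃ g : ProbabilityMeasure ℝ → ProbabilityMeasure (ι → ℝ), Continuous g ∧
        LeftInverse (fun ν => ν.map (measurable_pi_apply i).aemeasurable) g ∧
        g (μ.map (measurable_pi_apply i).aemeasurable) = μ} := by
  obtain ⟨s, hs, hinj⟩ := exists_dense_injOn_eval i
  obtain ⟨y₀, hy₀⟩ := hs.nonempty
  intro μ
  let φ := SimpleFunc.approxOn id measurable_id s y₀ hy₀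
  have hlim : Tendsto (fun n => μ.map (φ n).measurable.aemeasurable) atTop (𝓝 μ) := by
    simpa only [ProbabilityMeasure.map_id] using
      μ.tendsto_map_of_ae_tendsto (fun n => (φ n).measurable.aemeasurable) aemeasurable_id
        (ae_of_all _ fun x =>
          SimpleFunc.tendsto_approxOn measurable_id hy₀ (hs.closure_eq ▸ mem_univ x))
  refine mem_closure_of_tendsto hlim (Eventually.of_forall fun n => ?_)
  obtain ⟨σ, hσ, hσi, hσF⟩ := exists_continuous_section_eval_of_injOn i (φ n).finite_range
    (hinj.mono (range_subset_iff.2 (SimpleFunc.approxOn_mem measurable_id hy₀ n)))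
  exact ⟨fun ν => ν.map hσ.measurable.aemeasurable, ProbabilityMeasure.continuous_map hσ,
    ProbabilityMeasure.map_map_of_leftInverse (measurable_pi_apply i) hσ.measurable hσi,
    μ.map_map_map_of_leftInvOn_range (φ n).measurable (measurable_pi_apply i) hσ.measurable
      hσF⟩

/-- For `k ≥ 2`, if `S` is a nowhere dense set of Borel probability measures on `ℝ`, then
the set of probability measures on `ℝ^k` whose first one-dimensional marginal belongs to
`S` is nowhere dense in the space of Borel probability measures on `ℝ^k` (both spaces
carrying the topology of weak convergence). -/
theorem isNowhereDense_firstMarginal_preimage (k : ℕ) (hk : 2 ≤ k)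
    (S : Set (ProbabilityMeasure ℝ)) (hS : IsNowhereDense S) :
    IsNowhereDense {μ : ProbabilityMeasure (Fin k → ℝ) |
      firstMarginal (by omega) μ ∈ S} :=
  hS.preimage_of_dense_sections (ProbabilityMeasure.continuous_map (continuous_apply _))
    (dense_setOf_exists_section_map_eval _)
end
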